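/- arXiv:1008.1692 — 8 statements merged into one kernel-verified Lean document; each statement's English description precedes it below -/
import Mathlib

section
/- Let C be a rigid monoidal abelian category over an algebraically closed field k in which the unit object is simple and the tensor product is exact in each variable. If V is a nonzero object of C, then the evaluation morphism d_V : V* ⊗ V → 1 is an epimorphism. -/
open CategoryTheory CategoryTheory.MonoidalCategory CategoryTheory.Limits

/-- In a rigid monoidal abelian category over an algebraically closed
field `k` with simple unit (a tensor category over `k`), the evaluation morphism
`d_V : V* ⊗ V ⟶ 𝟙` of a nonzero object `V` is an epimorphism. -/
theorem evaluation_epi_of_nonzero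
    (k : Type*) [Field k] [IsAlgClosed k]
    {C : Type*} [Category C] [Abelian C] [Linear k C]
    [MonoidalCategory C] [MonoidalPreadditive C] [MonoidalLinear k C]
    [RigidCategory C] [Simple (𝟙_ C)]
    (V : C) (hV : ¬ IsZero V) :
    Epi (ε_ V (Vᘁ)) := by
  apply epi_of_nonzero_to_simple
  intro h
  apply hV
  rw [IsZero.iff_id_eq_zero]
  have := ExactPairing.evaluation_coevaluation V (Vᘁ)
  rw [h] at this
  simp only [MonoidalPreadditive.whiskerLeft_zero, Limits.comp_zero] at this
  have : (𝟙 V : V ⟶ V) = 0 := by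
    have h2 := congrArg (fun f => (λ_ V).inv ≫ f ≫ (ρ_ V).hom) this
    simpa using h2.symm
  exact this
end

section
/- Let C be a tensor category over an algebraically closed field k and let V, W, X, Y be objects of C. Then the linear map Hom(V, W) ⊗_k Hom(X, Y) → Hom(V ⊗ X, W ⊗ Y) induced by the tensor product of morphisms is injective. -/
/-!
By duality, `f ↦ η ≫ ᘁV ◁ f` and `g ↦ η ≫ g ▷ Xᘁ` embed `Hom(V, W)` and `Hom(X, Y)` into spaces of
morphisms out of the unit, compatibly with `⊗`, so it suffices to treat `V = X = 𝟙`.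
There, suppose `∑ uᵢ ⊗ vᵢ = 0` with the `vᵢ` linearly independent and some `uⱼ ≠ 0`. Since `𝟙` is
simple, `uⱼ` is mono; by induction, pushing the relation through the cokernel of `uⱼ` shows that
every `uᵢ` factors through `uⱼ`, hence `uᵢ = aᵢ • uⱼ` by Schur's lemma. The relation becomes
`uⱼ ⊗ (∑ aᵢ • vᵢ) = 0`, which is impossible: in a rigid category tensoring preserves monos.
-/

open CategoryTheory CategoryTheory.MonoidalCategory CategoryTheory.Limits TensorProduct

variable {k : Type*} [Field k]
variable {C : Type*} [Category C] [Abelian C] [Linear k C]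
  [MonoidalCategory C] [MonoidalPreadditive C] [MonoidalLinear k C]

/-- The `k`-linear map `Hom(V, W) ⊗[k] Hom(X, Y) → Hom(V ⊗ X, W ⊗ Y)` induced by the
tensor product of morphisms. -/
noncomputable def homTensorHom (V W X Y : C) :
    (V ⟶ W) ⊗[k] (X ⟶ Y) →ₗ[k] (V ⊗ X ⟶ W ⊗ Y) :=
  TensorProduct.lift <| LinearMap.mk₂ k (fun f g => f ⊗ₘ g)
    (fun f f' g => by simp [MonoidalPreadditive.add_tensor])
    (fun a f g => by simp [MonoidalCategory.tensorHom_def])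
    (fun f g g' => by simp [MonoidalPreadditive.tensor_add])
    (fun a f g => by simp [MonoidalCategory.tensorHom_def])

section Rigid

variable {𝒞 : Type*} [Category 𝒞] [MonoidalCategory 𝒞] [RigidCategory 𝒞]

instance (A : 𝒞) : (tensorLeft A).IsRightAdjoint := (tensorLeftAdjunction A Aᘁ).isRightAdjoint

instance (A : 𝒞) : (tensorRight A).IsRightAdjoint := (tensorRightAdjunction (ᘁA) A).isRightAdjoint

lemma mono_tensorHom {P Q A B : 𝒞} (f : P ⟶ A) (g : Q ⟶ B) [Mono f] [Mono g] :
    Mono (f ⊗ₘ g) := by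
  have : Mono (f ▷ Q) := (tensorRight Q).map_mono f
  have : Mono (A ◁ g) := (tensorLeft A).map_mono g
  rw [MonoidalCategory.tensorHom_def]
  infer_instance

lemma tensorHom_ne_zero_of_unit [Abelian 𝒞] [Simple (𝟙_ 𝒞)] {A B : 𝒞} {f : 𝟙_ 𝒞 ⟶ A}
    {g : 𝟙_ 𝒞 ⟶ B} (hf : f ≠ 0) (hg : g ≠ 0) : f ⊗ₘ g ≠ 0 := by
  have := mono_of_nonzero_from_simple hf
  have := mono_of_nonzero_from_simple hg
  have := mono_tensorHom f g
  intro h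
  rw [h] at this
  exact Simple.not_isZero (𝟙_ 𝒞) ((IsZero.of_mono_zero (𝟙_ 𝒞 ⊗ 𝟙_ 𝒞) (A ⊗ B)).of_iso (λ_ _).symm)

end Rigid

lemma exists_eq_smul_of_comp_cokernel_π_eq_zero [IsAlgClosed k] {𝒜 : Type*} [Category 𝒜]
    [Abelian 𝒜] [Linear k 𝒜] {S A : 𝒜} [Simple S] [FiniteDimensional k (S ⟶ S)] (u : S ⟶ A)
    [Mono u] {u' : S ⟶ A} (h : u' ≫ cokernel.π u = 0) : ∃ a : k, u' = a • u := by
  obtain ⟨a, ha⟩ := endomorphism_simple_eq_smul_id k (Abelian.monoLift u u' h)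
  exact ⟨a, by rw [← Abelian.monoLift_comp u u' h, ← ha, Linear.smul_comp, Category.id_comp]⟩

lemma eq_zero_of_sum_tensorHom_eq_zero [IsAlgClosed k] [RigidCategory C] [Simple (𝟙_ C)]
    [FiniteDimensional k (𝟙_ C ⟶ 𝟙_ C)] {ι : Type*} {B : C} {v : ι → (𝟙_ C ⟶ B)}
    (hv : LinearIndependent k v) (s : Finset ι) {A : C} (u : ι → (𝟙_ C ⟶ A))
    (hs : ∑ i ∈ s, u i ⊗ₘ v i = 0) : ∀ i ∈ s, u i = 0 := by
  classical
  induction s using Finset.induction_on generalizing A with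
  | empty => simp
  | insert j s hj ih =>
    rw [Finset.sum_insert hj] at hs
    by_cases huj : u j = 0
    · rw [huj, MonoidalPreadditive.zero_tensor, zero_add] at hs
      exact Finset.forall_mem_insert _ _ _ |>.mpr ⟨huj, ih u hs⟩
    exfalso
    have := mono_of_nonzero_from_simple huj
    have hcomp : ∀ i ∈ s, u i ≫ cokernel.π (u j) = 0 := by
      refine ih (fun i => u i ≫ cokernel.π (u j)) ?_
      have := congrArg (· ≫ cokernel.π (u j) ▷ B) hs
      simpa [Preadditive.sum_comp, tensorHom_comp_whiskerRight] using this
    choose! a ha using fun i hi =>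
      exists_eq_smul_of_comp_cokernel_π_eq_zero (k := k) (u j) (hcomp i hi)
    have hw : v j + ∑ i ∈ s, a i • v i ≠ 0 := by
      intro h
      refine hv.notMem_span_image (s := s) hj ?_
      rw [eq_neg_of_add_eq_zero_left h, neg_mem_iff]
      exact Submodule.sum_mem _ fun i hi =>
        Submodule.smul_mem _ _ (Submodule.subset_span ⟨i, hi, rfl⟩)
    refine tensorHom_ne_zero_of_unit huj hw ?_
    rw [← hs, MonoidalPreadditive.tensor_add, tensor_sum]
    congr 1
    refine Finset.sum_congr rfl fun i hi => ?_
    rw [ha i hi]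
    simp [MonoidalCategory.tensorHom_def]

@[simp]
lemma homTensorHom_tmul {V W X Y : C} (f : V ⟶ W) (g : X ⟶ Y) :
    homTensorHom (k := k) V W X Y (f ⊗ₜ g) = f ⊗ₘ g :=
  rfl

lemma homTensorHom_unit_injective [IsAlgClosed k] [RigidCategory C] [Simple (𝟙_ C)]
    [FiniteDimensional k (𝟙_ C ⟶ 𝟙_ C)] (A B : C) :
    Function.Injective (homTensorHom (k := k) (𝟙_ C) A (𝟙_ C) B) := by
  rw [injective_iff_map_eq_zero]
  intro t ht
  let b := Module.Free.chooseBasis k (𝟙_ C ⟶ B)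
  obtain ⟨c, rfl⟩ := (TensorProduct.equivFinsuppOfBasisRight b).symm.surjective t
  rw [TensorProduct.equivFinsuppOfBasisRight_symm_apply, map_finsuppSum] at ht
  simp only [homTensorHom_tmul] at ht
  have hc : c = 0 := Finsupp.ext fun i => by
    by_cases hi : i ∈ c.support
    · exact eq_zero_of_sum_tensorHom_eq_zero b.linearIndependent c.support c ht i hi
    · exact Finsupp.notMem_support_iff.mp hi
  rw [hc, map_zero]

def coevaluationCompWhiskerLeft (D V W : C) [ExactPairing D V] :
    (V ⟶ W) →ₗ[k] (𝟙_ C ⟶ D ⊗ W) where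
  toFun f := η_ D V ≫ D ◁ f
  map_add' := by simp
  map_smul' := by simp

def coevaluationCompWhiskerRight (X D Y : C) [ExactPairing X D] :
    (X ⟶ Y) →ₗ[k] (𝟙_ C ⟶ Y ⊗ D) where
  toFun g := η_ X D ≫ g ▷ D
  map_add' := by simp
  map_smul' := by simp

lemma coevaluationCompWhiskerLeft_injective (D V W : C) [ExactPairing D V] :
    Function.Injective (coevaluationCompWhiskerLeft (k := k) D V W) := fun f f' h => by
  have := congrArg (tensorLeftHomEquiv (𝟙_ C) D V W).symm h
  simp only [coevaluationCompWhiskerLeft, LinearMap.coe_mk, AddHom.coe_mk,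
    tensorLeftHomEquiv_symm_coevaluation_comp_whiskerLeft] at this
  exact (cancel_epi _).mp this

lemma coevaluationCompWhiskerRight_injective (X D Y : C) [ExactPairing X D] :
    Function.Injective (coevaluationCompWhiskerRight (k := k) X D Y) := fun g g' h => by
  have := congrArg (tensorRightHomEquiv (𝟙_ C) X D Y).symm h
  simp only [coevaluationCompWhiskerRight, LinearMap.coe_mk, AddHom.coe_mk,
    tensorRightHomEquiv_symm_coevaluation_comp_whiskerRight] at this
  exact (cancel_epi _).mp this

def coevaluationCompWhiskerLeftRight (D V W X D' Y : C) [ExactPairing D V] [ExactPairing X D'] :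
    (V ⊗ X ⟶ W ⊗ Y) →ₗ[k] (𝟙_ C ⊗ 𝟙_ C ⟶ (D ⊗ W) ⊗ (Y ⊗ D')) where
  toFun h := (η_ D V ⊗ₘ η_ X D') ≫ (α_ D V (X ⊗ D')).hom ≫
    D ◁ ((α_ V X D').inv ≫ h ▷ D' ≫ (α_ W Y D').hom) ≫ (α_ D W (Y ⊗ D')).inv
  map_add' := by simp
  map_smul' := by simp

lemma coevaluationCompWhiskerLeftRight_tensorHom (D V W X D' Y : C) [ExactPairing D V]
    [ExactPairing X D'] (f : V ⟶ W) (g : X ⟶ Y) :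
    coevaluationCompWhiskerLeftRight (k := k) D V W X D' Y (f ⊗ₘ g) =
      coevaluationCompWhiskerLeft (k := k) D V W f ⊗ₘ
        coevaluationCompWhiskerRight (k := k) X D' Y g := by
  simp only [coevaluationCompWhiskerLeftRight, coevaluationCompWhiskerLeft,
    coevaluationCompWhiskerRight, LinearMap.coe_mk, AddHom.coe_mk]
  rw [← MonoidalCategory.tensorHom_comp_tensorHom]
  congr 1
  simp only [MonoidalCategory.tensorHom_def]
  monoidal

lemma coevaluationCompWhiskerLeftRight_comp_homTensorHom (D V W X D' Y : C) [ExactPairing D V]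
    [ExactPairing X D'] :
    coevaluationCompWhiskerLeftRight D V W X D' Y ∘ₗ homTensorHom V W X Y =
      homTensorHom (k := k) (𝟙_ C) (D ⊗ W) (𝟙_ C) (Y ⊗ D') ∘ₗ
        TensorProduct.map (coevaluationCompWhiskerLeft D V W)
          (coevaluationCompWhiskerRight X D' Y) :=
  TensorProduct.ext' fun f g => by
    simp [coevaluationCompWhiskerLeftRight_tensorHom]

/-- In a tensor category over an algebraically closed field `k`, the
linear map `Hom(V, W) ⊗[k] Hom(X, Y) → Hom(V ⊗ X, W ⊗ Y)` induced by the tensor product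
of morphisms is injective. -/
theorem homTensorHom_injective
    [IsAlgClosed k] [RigidCategory C] [Simple (𝟙_ C)]
    [∀ X : C, IsNoetherianObject X] [∀ X : C, IsArtinianObject X]
    [∀ X Y : C, FiniteDimensional k (X ⟶ Y)]
    (V W X Y : C) :
    Function.Injective (homTensorHom (k := k) V W X Y) := by
  let Φ := coevaluationCompWhiskerLeftRight (k := k) (ᘁV : C) V W X (Xᘁ : C) Y
  have hΦ : Function.Injective (Φ ∘ homTensorHom (k := k) V W X Y) := by
    rw [← LinearMap.coe_comp, coevaluationCompWhiskerLeftRight_comp_homTensorHom,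
      LinearMap.coe_comp]
    exact (homTensorHom_unit_injective _ _).comp <| TensorProduct.map_injective_of_flat_flat _ _
      (coevaluationCompWhiskerLeft_injective _ _ _) (coevaluationCompWhiskerRight_injective _ _ _)
  exact hΦ.of_comp
end

section
/- Let C be a tensor category over an algebraically closed field k, let I be a small category, let F, G : I → C be functors, and let V, W be objects of C. If f₁, …, f_m ∈ Nat(F, G) are linearly independent natural transformations and c₁, …, c_m : V → W are morphisms such that for every object X of I, Σᵢ cᵢ ⊗ (fᵢ)_X = 0 as a morphism V ⊗ F(X) → W ⊗ G(X), then cᵢ = 0 for all i. -/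
/-!
Expanding the `cᵢ` in a basis `dⱼ` of their span turns the hypothesis into
`∑ⱼ dⱼ ⊗ gⱼ = 0` with `gⱼ` linear combinations of the `fᵢ`, so it suffices to show that
`∑ⱼ dⱼ ⊗ hⱼ = 0` with the `dⱼ` linearly independent forces all `hⱼ = 0`. Composing with the
coevaluation `𝟙 ⟶ ᘁV ⊗ V` reduces this to `V = 𝟙`. There the `dⱼ : 𝟙 ⟶ D` assemble into a
monomorphism `𝟙^⊕n ⟶ D`: a nonzero kernel would contain a simple subobject, necessarily a copy
of `𝟙`, and since `End(𝟙) = k` its coordinates give a linear relation among the `dⱼ`. Tensoring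
on the right is exact in a rigid category, so `∑ⱼ ιⱼ ⊗ hⱼ = 0` and projecting gives `hⱼ = 0`.
-/

theorem LinearMap.eq_zero_of_sum_apply_eq_zero_of_linearIndependent {K M N P : Type*} [Field K]
    [AddCommGroup M] [Module K M] [AddCommGroup N] [Module K N] [AddCommGroup P] [Module K P]
    (B : M →ₗ[K] N →ₗ[K] P)
    (hB : ∀ {n : ℕ} {d : Fin n → M}, LinearIndependent K d →
      ∀ {h : Fin n → N}, ∑ j, B (d j) (h j) = 0 → ∀ j, h j = 0)
    {ι : Type*} [Fintype ι] {f : ι → N} (hf : LinearIndependent K f) {c : ι → M}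
    (hc : ∑ i, B (c i) (f i) = 0) (i : ι) : c i = 0 := by
  let S := Submodule.span K (Set.range c)
  have : FiniteDimensional K S := FiniteDimensional.span_of_finite K (Set.finite_range c)
  let b := Module.finBasis K S
  let a : ι → Fin (Module.finrank K S) → K :=
    fun i => b.repr ⟨c i, Submodule.subset_span ⟨i, rfl⟩⟩
  have hca : ∀ i, c i = ∑ j, a i j • (b j : M) := fun i => by
    have := congrArg Subtype.val (b.sum_repr ⟨c i, Submodule.subset_span ⟨i, rfl⟩⟩)
    simpa only [Submodule.coe_sum, Submodule.coe_smul] using this.symm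
  have hsum : ∑ j, B (b j) (∑ i, a i j • f i) = 0 := calc
    _ = ∑ j, ∑ i, a i j • B (b j) (f i) := by simp only [map_sum, map_smul]
    _ = ∑ i, ∑ j, a i j • B (b j) (f i) := Finset.sum_comm
    _ = ∑ i, B (c i) (f i) := by
      simp only [hca, map_sum, map_smul, LinearMap.sum_apply, LinearMap.smul_apply]
    _ = 0 := hc
  have ha : ∀ j, ∀ i, a i j = 0 := fun j => Fintype.linearIndependent_iff.mp hf _
    (hB (b.linearIndependent.map' S.subtype S.ker_subtype) hsum j)
  simp [hca i, ha]

namespace CategoryTheory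

open MonoidalCategory Limits

attribute [local instance] Abelian.hasFiniteBiproducts

section Schur

variable {C : Type*} [Category C] [Abelian C]

lemma exists_ne_zero_comp_eq_zero_of_not_mono {ι : Type*} [Fintype ι] {X D : C} [Simple X]
    (g : (⨁ fun _ : ι => X) ⟶ D) [IsArtinianObject (kernel g)] (hg : ¬Mono g) :
    ∃ w : X ⟶ ⨁ fun _ : ι => X, w ≠ 0 ∧ w ≫ g = 0 := by
  have hK : ¬IsZero (kernel g) := fun hK => hg (Preadditive.mono_of_isZero_kernel g hK)
  let t := simpleSubobjectArrow hK ≫ kernel.ι g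
  have ht : t ≠ 0 := fun ht => id_nonzero _ ((cancel_mono t).mp (by simp [ht]))
  obtain ⟨j, hj⟩ : ∃ j, t ≫ biproduct.π _ j ≠ 0 := by
    by_contra! h
    exact ht (biproduct.hom_ext _ _ fun j => by simp [h j])
  have := isIso_of_hom_simple hj
  refine ⟨inv (t ≫ biproduct.π _ j) ≫ t, fun hw => id_nonzero X ?_, by simp [t]⟩
  simpa using hw =≫ biproduct.π _ j

variable (k : Type*) [Field k] [IsAlgClosed k] [Linear k C]

lemma eq_zero_of_comp_biproduct_desc_eq_zero {ι : Type} [Fintype ι] {X D : C} [Simple X]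
    [FiniteDimensional k (X ⟶ X)] {u : ι → (X ⟶ D)} (hu : LinearIndependent k u)
    {w : X ⟶ ⨁ fun _ : ι => X} (hw : w ≫ biproduct.desc u = 0) : w = 0 := by
  choose a ha using fun i => endomorphism_simple_eq_smul_id k (w ≫ biproduct.π _ i)
  have hsum : ∑ i, a i • u i = 0 := by
    rw [biproduct.desc_eq, Preadditive.comp_sum] at hw
    simpa only [← Category.assoc, ← ha, Linear.smul_comp, Category.id_comp] using hw
  have ha0 := Fintype.linearIndependent_iff.mp hu a hsum
  exact biproduct.hom_ext _ _ fun i => by rw [← ha i, ha0 i, zero_smul, zero_comp]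

lemma mono_biproduct_desc_of_linearIndependent [∀ Y : C, IsArtinianObject Y]
    {ι : Type} [Fintype ι] {X D : C} [Simple X] [FiniteDimensional k (X ⟶ X)]
    {u : ι → (X ⟶ D)} (hu : LinearIndependent k u) : Mono (biproduct.desc u) := by
  by_contra hg
  obtain ⟨w, hw0, hw⟩ := exists_ne_zero_comp_eq_zero_of_not_mono _ hg
  exact hw0 (eq_zero_of_comp_biproduct_desc_eq_zero k hu hw)

end Schur

section LeftRigid

variable {C : Type*} [Category C] [MonoidalCategory C] [LeftRigidCategory C]

instance mono_whiskerRight_of_leftRigid {X Y : C} (f : X ⟶ Y) [Mono f] (Z : C) :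
    Mono (f ▷ Z) := by
  have := Functor.preservesMonomorphisms_of_adjunction (tensorRightAdjunction (ᘁZ) Z)
  exact (tensorRight Z).map_mono f

lemma coevaluation_comp_whiskerLeft_injective (V W : C) :
    Function.Injective fun e : V ⟶ W => η_ (ᘁV) V ≫ (ᘁV) ◁ e := by
  have key : ∀ e : V ⟶ W,
      η_ (ᘁV) V ≫ (ᘁV) ◁ e = tensorLeftHomEquiv (𝟙_ C) (ᘁV) V W ((ρ_ V).hom ≫ e) := by
    intro e
    dsimp [tensorLeftHomEquiv]
    monoidal
  intro x y hxy
  simpa [key] using hxy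

lemma coevaluation_comp_whiskerLeft_tensorHom {V W A B : C} (d : V ⟶ W) (h : A ⟶ B) :
    (η_ (ᘁV) V ≫ (ᘁV) ◁ d) ⊗ₘ h =
      η_ (ᘁV) V ▷ A ≫ (α_ (ᘁV) V A).hom ≫ (ᘁV) ◁ (d ⊗ₘ h) ≫ (α_ (ᘁV) W B).inv := by
  rw [← id_tensorHom (ᘁV) (d ⊗ₘ h), associator_inv_naturality, Iso.hom_inv_id_assoc,
    ← tensorHom_id, tensorHom_comp_tensorHom, Category.id_comp, id_tensorHom]

end LeftRigid

lemma eq_zero_of_sum_biproduct_ι_tensor_eq_zero {C : Type*} [Category C] [Preadditive C]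
    [HasFiniteBiproducts C] [MonoidalCategory C] [MonoidalPreadditive C]
    {ι : Type*} [Fintype ι] {A B : C} {h : ι → (A ⟶ B)}
    (hs : ∑ i, biproduct.ι (fun _ : ι => 𝟙_ C) i ⊗ₘ h i = 0) (j : ι) : h j = 0 := by
  classical
  have hj := hs =≫ (biproduct.π (fun _ : ι => 𝟙_ C) j ▷ B)
  simp only [Preadditive.sum_comp, zero_comp, ← tensorHom_id, tensorHom_comp_tensorHom,
    Category.comp_id, biproduct.ι_π] at hj
  rw [Finset.sum_eq_single j (fun i _ hij => by simp [hij]) (by simp)] at hj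
  simpa using hj

section Rigid

variable (k : Type*) [Field k] [IsAlgClosed k]
variable {C : Type*} [Category C] [Abelian C] [Linear k C]
  [MonoidalCategory C] [MonoidalPreadditive C] [LeftRigidCategory C]
  [Simple (𝟙_ C)] [FiniteDimensional k (𝟙_ C ⟶ 𝟙_ C)] [∀ X : C, IsArtinianObject X]

lemma eq_zero_of_sum_unit_tensor_eq_zero {ι : Type} [Fintype ι] {D A B : C}
    {u : ι → (𝟙_ C ⟶ D)} (hu : LinearIndependent k u) {h : ι → (A ⟶ B)}
    (hs : ∑ i, u i ⊗ₘ h i = 0) (i : ι) : h i = 0 := by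
  have := mono_biproduct_desc_of_linearIndependent k hu
  refine eq_zero_of_sum_biproduct_ι_tensor_eq_zero
    (zero_of_comp_mono (biproduct.desc u ▷ B) ?_) i
  simpa [Preadditive.sum_comp, ← tensorHom_id, tensorHom_comp_tensorHom] using hs

lemma eq_zero_of_sum_tensor_eq_zero [MonoidalLinear k C] {ι : Type} [Fintype ι] {V W A B : C}
    {d : ι → (V ⟶ W)} (hd : LinearIndependent k d) {h : ι → (A ⟶ B)}
    (hs : ∑ i, d i ⊗ₘ h i = 0) (i : ι) : h i = 0 := by
  let Φ := (Linear.leftComp k ((ᘁV) ⊗ W) (η_ (ᘁV) V)).comp ((tensorLeft (ᘁV)).mapLinearMap k)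
  have hΦ : LinearIndependent k (Φ ∘ d) :=
    hd.map' Φ (LinearMap.ker_eq_bot.mpr (coevaluation_comp_whiskerLeft_injective V W))
  refine eq_zero_of_sum_unit_tensor_eq_zero k hΦ ?_ i
  have hΦd : ∀ i, (Φ ∘ d) i = η_ (ᘁV) V ≫ (ᘁV) ◁ d i := fun _ => rfl
  simp only [hΦd, coevaluation_comp_whiskerLeft_tensorHom, ← Preadditive.comp_sum,
    ← Preadditive.sum_comp, ← whiskerLeft_sum, hs, MonoidalPreadditive.whiskerLeft_zero,
    zero_comp, comp_zero]

end Rigid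

section Bilinear

variable (k : Type*) [CommSemiring k] {C : Type*} [Category C] [Preadditive C] [Linear k C]
  [MonoidalCategory C] [MonoidalPreadditive C] [MonoidalLinear k C]

lemma smul_tensorHom (r : k) {V W A B : C} (e : V ⟶ W) (x : A ⟶ B) :
    (r • e) ⊗ₘ x = r • (e ⊗ₘ x) := by
  rw [MonoidalCategory.tensorHom_def, MonoidalLinear.smul_whiskerRight, Linear.smul_comp,
    ← MonoidalCategory.tensorHom_def]

lemma tensorHom_smul (r : k) {V W A B : C} (e : V ⟶ W) (x : A ⟶ B) :
    e ⊗ₘ (r • x) = r • (e ⊗ₘ x) := by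
  rw [MonoidalCategory.tensorHom_def, MonoidalLinear.whiskerLeft_smul, Linear.comp_smul,
    ← MonoidalCategory.tensorHom_def]

def tensorHomAppBilin {I : Type*} [Category I] (F G : I ⥤ C) (V W : C) :
    (V ⟶ W) →ₗ[k] (F ⟶ G) →ₗ[k] ((X : I) → (V ⊗ F.obj X ⟶ W ⊗ G.obj X)) :=
  LinearMap.mk₂ k (fun c f X => c ⊗ₘ f.app X)
    (fun _ _ _ => funext fun _ => MonoidalPreadditive.add_tensor _ _ _)
    (fun _ _ _ => funext fun _ => smul_tensorHom k _ _ _)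
    (fun _ _ _ => funext fun _ => MonoidalPreadditive.tensor_add _ _ _)
    (fun _ _ _ => funext fun _ => tensorHom_smul k _ _ _)

end Bilinear

end CategoryTheory

open CategoryTheory CategoryTheory.MonoidalCategory CategoryTheory.Limits

/-- Let `C` be a tensor category over an algebraically closed field `k`,
`F G : I ⥤ C` functors from a small category, and `V, W` objects of `C`. If
`f₁, …, f_m : F ⟶ G` are linearly independent natural transformations and
`c₁, …, c_m : V ⟶ W` are morphisms with `∑ i, cᵢ ⊗ (fᵢ)_X = 0` for every `X`, then
all `cᵢ` vanish. -/
theorem tensor_natTrans_lin_indep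
    (k : Type*) [Field k] [IsAlgClosed k]
    {C : Type*} [Category C] [Abelian C] [Linear k C]
    [MonoidalCategory C] [MonoidalPreadditive C] [MonoidalLinear k C]
    [RigidCategory C] [Simple (𝟙_ C)]
    [∀ X : C, IsNoetherianObject X] [∀ X : C, IsArtinianObject X]
    [∀ X Y : C, FiniteDimensional k (X ⟶ Y)]
    {I : Type*} [SmallCategory I] (F G : I ⥤ C) (V W : C)
    {m : ℕ} (f : Fin m → (F ⟶ G)) (hf : LinearIndependent k f)
    (c : Fin m → (V ⟶ W))
    (h : ∀ X : I, ∑ i, (c i ⊗ₘ (f i).app X) = 0) :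
    ∀ i, c i = 0 := by
  refine (tensorHomAppBilin k F G V W).eq_zero_of_sum_apply_eq_zero_of_linearIndependent
    (fun hd g hg j => ?_) hf (funext fun X => by simpa [tensorHomAppBilin] using h X)
  ext X
  exact eq_zero_of_sum_tensor_eq_zero k hd (by simpa [tensorHomAppBilin] using congrFun hg X) j
end

section
/- Let C be a tensor category over an algebraically closed field k, let I₁, I₂ be small categories, and let F₁, G₁ : I₁ → C and F₂, G₂ : I₂ → C be functors. Then the linear map Nat(F₁, G₁) ⊗_k Nat(F₂, G₂) → Nat(F₁ ⊗ F₂, G₁ ⊗ G₂) induced by the tensor product is injective. -/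
open CategoryTheory CategoryTheory.MonoidalCategory CategoryTheory.Limits TensorProduct

variable {k : Type*} [Field k]
variable {C : Type*} [Category C] [Abelian C] [Linear k C]
  [MonoidalCategory C] [MonoidalPreadditive C] [MonoidalLinear k C]
variable {I₁ I₂ : Type*} [SmallCategory I₁] [SmallCategory I₂]

/-- The functor `F₁ ⊗ F₂ : I₁ × I₂ ⥤ C`, `(X, Y) ↦ F₁(X) ⊗ F₂(Y)`. -/
@[simps]
def tensorFunctor (F₁ : I₁ ⥤ C) (F₂ : I₂ ⥤ C) : I₁ × I₂ ⥤ C where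
  obj X := F₁.obj X.1 ⊗ F₂.obj X.2
  map f := F₁.map f.1 ⊗ₘ F₂.map f.2
  map_id X := by simp [tensorHom_id]
  map_comp f g := by simp [tensorHom_comp_tensorHom]

/-- The natural transformation `c ⊗ f : F₁ ⊗ F₂ ⟶ G₁ ⊗ G₂` with components `c_X ⊗ f_Y`. -/
@[simps]
def tensorNatTrans {F₁ G₁ : I₁ ⥤ C} {F₂ G₂ : I₂ ⥤ C} (c : F₁ ⟶ G₁) (f : F₂ ⟶ G₂) :
    tensorFunctor F₁ F₂ ⟶ tensorFunctor G₁ G₂ where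
  app X := c.app X.1 ⊗ₘ f.app X.2
  naturality X Y g := by
    simp only [tensorFunctor_map]
    erw [tensorHom_comp_tensorHom, tensorHom_comp_tensorHom, c.naturality, f.naturality]

/-- The `k`-linear map `Nat(F₁, G₁) ⊗[k] Nat(F₂, G₂) → Nat(F₁ ⊗ F₂, G₁ ⊗ G₂)` induced by
the tensor product. -/
noncomputable def natTensorNat (F₁ G₁ : I₁ ⥤ C) (F₂ G₂ : I₂ ⥤ C) :
    (F₁ ⟶ G₁) ⊗[k] (F₂ ⟶ G₂) →ₗ[k] (tensorFunctor F₁ F₂ ⟶ tensorFunctor G₁ G₂) :=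
  TensorProduct.lift <| LinearMap.mk₂ k tensorNatTrans
    (fun c c' f => by ext X; simp [MonoidalPreadditive.add_tensor]; rfl)
    (fun a c f => by ext X; simp [MonoidalCategory.tensorHom_def]; rfl)
    (fun c f f' => by ext X; simp [MonoidalPreadditive.tensor_add]; rfl)
    (fun a c f => by ext X; simp [MonoidalCategory.tensorHom_def]; rfl)

/-!
Evaluation at objects embeds `Nat(F, G)` into `∏ X, Hom(F X, G X)`, and over a field tensoring two
jointly injective families of linear maps gives a jointly injective family, so it suffices to show
that `Hom(A₁, B₁) ⊗ Hom(A₂, B₂) → Hom(A₁ ⊗ A₂, B₁ ⊗ B₂)` is injective. Duality turns `c ⊗ f` into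
the composite of a mate `B₁ᘁ ⊗ A₁ ⟶ 𝟙` of `c` with a mate `𝟙 ⟶ B₂ ⊗ A₂ᘁ` of `f`, so it is enough
that composition `Hom(M, 𝟙) ⊗ Hom(𝟙, N) → Hom(M, N)` is injective. This holds because `𝟙` is simple
with `End 𝟙 = k`: a nonzero `g : 𝟙 ⟶ N` is mono, and a family `gⱼ : 𝟙 ⟶ N` linearly independent
together with `g` stays linearly independent after composing with `cokernel.π g`, which allows an
induction on the number of `gⱼ`.
-/

section TensorPi

theorem TensorProduct.equivFinsuppOfBasisLeft_lTensor_apply {R M N P ι : Type*} [CommSemiring R]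
    [AddCommMonoid M] [Module R M] [AddCommMonoid N] [Module R N] [AddCommMonoid P] [Module R P]
    [DecidableEq ι] (b : Module.Basis ι R M) (g : N →ₗ[R] P) (t : M ⊗[R] N) (i : ι) :
    equivFinsuppOfBasisLeft b (g.lTensor M t) i = g (equivFinsuppOfBasisLeft b t i) := by
  induction t using TensorProduct.induction_on <;> simp_all

variable {R M N : Type*} [CommRing R] [AddCommGroup M] [Module R M] [AddCommGroup N] [Module R N]

-- Freeness rather than flatness, as the family may be infinite.
theorem LinearMap.pi_lTensor_injective [Module.Free R M] {κ : Type*} {Q : κ → Type*}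
    [∀ j, AddCommGroup (Q j)] [∀ j, Module R (Q j)] {g : ∀ j, N →ₗ[R] Q j}
    (hg : Function.Injective (LinearMap.pi g)) :
    Function.Injective (LinearMap.pi fun j => (g j).lTensor M) := by
  classical
  let b := Module.Free.chooseBasis R M
  rw [injective_iff_map_eq_zero] at hg ⊢
  intro t ht
  refine (equivFinsuppOfBasisLeft b).map_eq_zero_iff.mp
    (Finsupp.ext fun i => hg _ (funext fun j => ?_))
  simpa [equivFinsuppOfBasisLeft_lTensor_apply] using
    congrArg (equivFinsuppOfBasisLeft b · i) (congr_fun ht j)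

theorem LinearMap.pi_rTensor_injective [Module.Free R M] {κ : Type*} {Q : κ → Type*}
    [∀ j, AddCommGroup (Q j)] [∀ j, Module R (Q j)] {g : ∀ j, N →ₗ[R] Q j}
    (hg : Function.Injective (LinearMap.pi g)) :
    Function.Injective (LinearMap.pi fun j => (g j).rTensor M) := by
  intro t t' h
  refine (TensorProduct.comm R N M).injective (pi_lTensor_injective hg (funext fun j => ?_))
  simp only [LinearMap.pi_apply, lTensor_comm]
  exact congrArg _ (congr_fun h j)

theorem TensorProduct.pi_map_injective [Module.Free R M] {ι κ : Type*} {P : ι → Type*}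
    {Q : κ → Type*} [∀ i, AddCommGroup (P i)] [∀ i, Module R (P i)]
    [∀ j, AddCommGroup (Q j)] [∀ j, Module R (Q j)] [∀ j, Module.Free R (Q j)]
    {f : ∀ i, M →ₗ[R] P i} {g : ∀ j, N →ₗ[R] Q j}
    (hf : Function.Injective (LinearMap.pi f)) (hg : Function.Injective (LinearMap.pi g)) :
    Function.Injective (LinearMap.pi fun p : ι × κ => map (f p.1) (g p.2)) := by
  intro t t' h
  refine LinearMap.pi_lTensor_injective hg (funext fun j => ?_)
  refine LinearMap.pi_rTensor_injective hf (funext fun i => ?_)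
  simpa [← LinearMap.rTensor_comp_lTensor] using congr_fun h (i, j)

end TensorPi

section SimpleObject

variable {𝕜 : Type*} [Field 𝕜] [IsAlgClosed 𝕜] {D : Type*} [Category D] [Abelian D] [Linear 𝕜 D]
  {S : D} [Simple S] [FiniteDimensional 𝕜 (S ⟶ S)]

theorem ker_rightComp_cokernel_π_le_span {N : D} (g : S ⟶ N) [Mono g] :
    LinearMap.ker (Linear.rightComp 𝕜 S (cokernel.π g)) ≤ 𝕜 ∙ g := by
  intro f hf
  obtain ⟨c, hc⟩ := endomorphism_simple_eq_smul_id 𝕜 (Abelian.monoLift g f hf)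
  refine Submodule.mem_span_singleton.mpr ⟨c, ?_⟩
  rw [← Abelian.monoLift_comp g f hf, ← hc, Linear.smul_comp, Category.id_comp]

theorem linearIndepOn_comp_cokernel_π {N : D} {ι : Type*} {g : ι → (S ⟶ N)} {a : ι}
    {s : Set ι} (ha : a ∉ s) (hg : LinearIndepOn 𝕜 g (insert a s)) :
    LinearIndepOn 𝕜 (fun j => g j ≫ cokernel.π (g a)) s := by
  obtain ⟨hs, hga⟩ := (linearIndepOn_insert ha).mp hg
  have : Mono (g a) := mono_of_nonzero_from_simple fun h => hga (h ▸ Submodule.zero_mem _)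
  refine hs.map (f := Linear.rightComp 𝕜 S (cokernel.π (g a))) ?_
  rw [← Set.image_eq_range]
  exact (Submodule.disjoint_span_singleton_of_notMem hga).mono_right
    (ker_rightComp_cokernel_π_le_span (g a))

theorem eq_zero_of_sum_comp_eq_zero {M N : D} {ι : Type*} {s : Finset ι} {g : ι → (S ⟶ N)}
    (hg : LinearIndepOn 𝕜 g s) {m : ι → (M ⟶ S)} (h : ∑ j ∈ s, m j ≫ g j = 0) :
    ∀ j ∈ s, m j = 0 := by
  classical
  induction s using Finset.induction_on generalizing N with
  | empty => simp
  | insert a s ha ih =>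
    rw [Finset.coe_insert] at hg
    have : Mono (g a) := mono_of_nonzero_from_simple (hg.ne_zero (Set.mem_insert a _))
    have hs : ∀ j ∈ s, m j = 0 := by
      refine ih (linearIndepOn_comp_cokernel_π (by simpa using ha) hg) ?_
      simpa [Finset.sum_insert ha, Preadditive.sum_comp] using congrArg (· ≫ cokernel.π (g a)) h
    have hma : m a ≫ g a = 0 := by
      rwa [Finset.sum_insert ha, Finset.sum_eq_zero fun j hj => by rw [hs j hj, zero_comp],
        add_zero] at h
    intro j hj
    rcases Finset.mem_insert.mp hj with rfl | hj
    · exact zero_of_comp_mono _ hma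
    · exact hs j hj

theorem lift_comp_injective_of_simple (M N : D) :
    Function.Injective (lift (Linear.comp (S := 𝕜) M S N)) := by
  rw [injective_iff_map_eq_zero]
  intro t ht
  let b := Module.Basis.ofVectorSpace 𝕜 (S ⟶ N)
  obtain ⟨m, rfl⟩ := eq_repr_basis_right b t
  have hm : ∀ i ∈ m.support, m i = 0 := by
    refine eq_zero_of_sum_comp_eq_zero (b.linearIndependent.linearIndepOn _) ?_
    simpa [Finsupp.sum] using ht
  have : m = 0 := Finsupp.ext fun i =>
    by_contra fun hi => hi (hm i (Finsupp.mem_support_iff.mpr hi))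
  simp [this]

end SimpleObject

section Rigid

variable [RigidCategory C]

noncomputable def mateToUnit (A B : C) : (A ⟶ B) →ₗ[k] (Bᘁ ⊗ A ⟶ 𝟙_ C) where
  toFun c := (tensorLeftHomEquiv A B Bᘁ (𝟙_ C)).symm (c ≫ (ρ_ B).inv)
  map_add' c c' := by simp [tensorLeftHomEquiv]
  map_smul' a c := by simp [tensorLeftHomEquiv]

theorem mateToUnit_injective (A B : C) : Function.Injective (mateToUnit (k := k) A B) :=
  fun _ _ h => by simpa using (tensorLeftHomEquiv A B Bᘁ (𝟙_ C)).symm.injective h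

noncomputable def mateFromUnit (A B : C) : (A ⟶ B) →ₗ[k] (𝟙_ C ⟶ B ⊗ Aᘁ) where
  toFun f := tensorRightHomEquiv (𝟙_ C) A Aᘁ B ((λ_ A).hom ≫ f)
  map_add' f f' := by simp [tensorRightHomEquiv]
  map_smul' a f := by simp [tensorRightHomEquiv]

theorem mateFromUnit_injective (A B : C) : Function.Injective (mateFromUnit (k := k) A B) :=
  fun _ _ h => by simpa using (tensorRightHomEquiv (𝟙_ C) A Aᘁ B).injective h

noncomputable def tensorMate (A₁ B₁ A₂ B₂ : C) :
    (A₁ ⊗ A₂ ⟶ B₁ ⊗ B₂) →ₗ[k] (B₁ᘁ ⊗ A₁ ⟶ B₂ ⊗ A₂ᘁ) where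
  toFun T := (tensorLeftHomEquiv A₁ B₁ B₁ᘁ (B₂ ⊗ A₂ᘁ)).symm
      (tensorRightHomEquiv A₁ A₂ A₂ᘁ (B₁ ⊗ B₂) T ≫ (α_ B₁ B₂ A₂ᘁ).hom)
  map_add' T T' := by simp [tensorLeftHomEquiv, tensorRightHomEquiv]
  map_smul' a T := by simp [tensorLeftHomEquiv, tensorRightHomEquiv]

theorem tensorMate_tensorHom {A₁ B₁ A₂ B₂ : C} (c : A₁ ⟶ B₁) (f : A₂ ⟶ B₂) :
    tensorMate (k := k) A₁ B₁ A₂ B₂ (c ⊗ₘ f) =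
      mateToUnit (k := k) A₁ B₁ c ≫ mateFromUnit (k := k) A₂ B₂ f := by
  dsimp [tensorMate, mateToUnit, mateFromUnit]
  apply (tensorLeftHomEquiv A₁ B₁ B₁ᘁ (B₂ ⊗ A₂ᘁ)).injective
  rw [Equiv.apply_symm_apply, tensorLeftHomEquiv_naturality, Equiv.apply_symm_apply]
  dsimp [tensorRightHomEquiv]
  calc ((ρ_ A₁).inv ≫ A₁ ◁ η_ A₂ A₂ᘁ ≫ (α_ A₁ A₂ A₂ᘁ).inv ≫ (c ⊗ₘ f) ▷ A₂ᘁ) ≫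
        (α_ B₁ B₂ A₂ᘁ).hom
      = 𝟙 _ ⊗≫ (A₁ ◁ η_ A₂ A₂ᘁ ≫ c ▷ (A₂ ⊗ A₂ᘁ)) ⊗≫ B₁ ◁ (f ▷ A₂ᘁ) := by
        rw [MonoidalCategory.tensorHom_def]; monoidal
    _ = 𝟙 _ ⊗≫ (c ▷ 𝟙_ C ≫ B₁ ◁ η_ A₂ A₂ᘁ) ⊗≫ B₁ ◁ (f ▷ A₂ᘁ) := by
        rw [whisker_exchange]
    _ = (c ≫ (ρ_ B₁).inv) ≫ B₁ ◁ ((ρ_ (𝟙_ C)).inv ≫ 𝟙_ C ◁ η_ A₂ A₂ᘁ ≫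
          (α_ (𝟙_ C) A₂ A₂ᘁ).inv ≫ ((λ_ A₂).hom ≫ f) ▷ A₂ᘁ) := by
        monoidal

noncomputable def homTensor (A₁ B₁ A₂ B₂ : C) :
    (A₁ ⟶ B₁) ⊗[k] (A₂ ⟶ B₂) →ₗ[k] (A₁ ⊗ A₂ ⟶ B₁ ⊗ B₂) :=
  lift <| LinearMap.mk₂ k (· ⊗ₘ ·) MonoidalPreadditive.add_tensor
    (fun a c f => by simp [MonoidalCategory.tensorHom_def]) MonoidalPreadditive.tensor_add
    (fun a c f => by simp [MonoidalCategory.tensorHom_def])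

theorem tensorMate_comp_homTensor (A₁ B₁ A₂ B₂ : C) :
    tensorMate A₁ B₁ A₂ B₂ ∘ₗ homTensor A₁ B₁ A₂ B₂ =
      lift (Linear.comp (S := k) _ _ _) ∘ₗ map (mateToUnit A₁ B₁) (mateFromUnit A₂ B₂) :=
  TensorProduct.ext' fun c f => tensorMate_tensorHom c f

theorem homTensor_injective [IsAlgClosed k] [Simple (𝟙_ C)] [FiniteDimensional k (𝟙_ C ⟶ 𝟙_ C)]
    (A₁ B₁ A₂ B₂ : C) : Function.Injective (homTensor (k := k) A₁ B₁ A₂ B₂) := by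
  refine Function.Injective.of_comp (f := tensorMate (k := k) A₁ B₁ A₂ B₂) ?_
  rw [← LinearMap.coe_comp, tensorMate_comp_homTensor, LinearMap.coe_comp]
  exact (lift_comp_injective_of_simple _ _).comp <| map_injective_of_flat_flat _ _
    (mateToUnit_injective A₁ B₁) (mateFromUnit_injective A₂ B₂)

end Rigid

theorem NatTrans.pi_appLinearMap_injective {R D E : Type*} [Semiring R] [Category D] [Category E]
    [Preadditive E] [Linear R E] (F G : D ⥤ E) :
    Function.Injective (LinearMap.pi fun X => NatTrans.appLinearMap (R := R) (F := F) (G := G) X) :=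
  fun _ _ h => NatTrans.ext (funext fun X => congr_fun h X)

theorem appLinearMap_comp_natTensorNat (F₁ G₁ : I₁ ⥤ C) (F₂ G₂ : I₂ ⥤ C) (X : I₁) (Y : I₂) :
    NatTrans.appLinearMap (X, Y) ∘ₗ natTensorNat (k := k) F₁ G₁ F₂ G₂ =
      homTensor _ _ _ _ ∘ₗ map (NatTrans.appLinearMap X) (NatTrans.appLinearMap Y) :=
  TensorProduct.ext' fun _ _ => rfl

/-- In a tensor category over an algebraically closed field `k`, the
linear map `Nat(F₁, G₁) ⊗[k] Nat(F₂, G₂) → Nat(F₁ ⊗ F₂, G₁ ⊗ G₂)` induced by the tensor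
product is injective. -/
theorem natTensorNat_injective
    [IsAlgClosed k] [RigidCategory C] [Simple (𝟙_ C)]
    [∀ X : C, IsNoetherianObject X] [∀ X : C, IsArtinianObject X]
    [∀ X Y : C, FiniteDimensional k (X ⟶ Y)]
    (F₁ G₁ : I₁ ⥤ C) (F₂ G₂ : I₂ ⥤ C) :
    Function.Injective (natTensorNat (k := k) F₁ G₁ F₂ G₂) := by
  intro t t' h
  refine pi_map_injective (NatTrans.pi_appLinearMap_injective F₁ G₁)
    (NatTrans.pi_appLinearMap_injective F₂ G₂)
    (funext fun ⟨X, Y⟩ => homTensor_injective _ _ _ _ ?_)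
  have hXY := congrArg (NatTrans.appLinearMap (R := k) (X, Y)) h
  rwa [← LinearMap.comp_apply, ← LinearMap.comp_apply, appLinearMap_comp_natTensorNat] at hXY
end

section
/- Let A, B be k-linear abelian categories with all hom spaces of B finite-dimensional over k, and F, G : A → B right exact k-linear functors. If A has a projective generator P and every object of A has finite length, then Nat(F, G) is finite-dimensional over k, with dim Nat(F, G) ≤ dim Hom_B(F(P), G(P)). -/
open CategoryTheory CategoryTheory.Limits

attribute [local instance] CategoryTheory.Abelian.hasFiniteBiproducts

/-!
Evaluation at `P` is a `k`-linear map `Nat(F, G) → Hom(F(P), G(P))`, and it is injective: if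
`γ.app P = 0`, then `γ` vanishes on every finite direct sum of copies of `P` because `F` is
additive, and hence on every object, since each is a quotient of such a sum and the right exact
functor `F` preserves epimorphisms.
-/

namespace CategoryTheory.NatTrans

variable {C D : Type*} [Category C] [Category D] {F G : C ⥤ D}

theorem app_eq_zero_of_epi [HasZeroMorphisms D] (γ : F ⟶ G) {X Y : C} (q : X ⟶ Y)
    [Epi (F.map q)] (h : γ.app X = 0) : γ.app Y = 0 := by
  rw [← cancel_epi (F.map q), γ.naturality, h, zero_comp, comp_zero]

theorem app_biproduct_eq_zero [Preadditive C] [Preadditive D] [F.Additive]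
    [HasFiniteBiproducts C] [HasFiniteBiproducts D] (γ : F ⟶ G) {J : Type} [Finite J]
    (f : J → C) (h : ∀ j, γ.app (f j) = 0) : γ.app (⨁ f) = 0 := by
  rw [← cancel_epi (F.mapBiproduct f).inv, Functor.mapBiproduct_inv, comp_zero]
  ext j
  simp [h]

theorem eq_zero_of_app_generator_eq_zero [Preadditive C] [Preadditive D] [F.Additive]
    [HasFiniteBiproducts C] [HasFiniteBiproducts D] [F.PreservesEpimorphisms] (P : C)
    (hP : ∀ X : C, ∃ (n : ℕ) (q : (⨁ fun _ : Fin n => P) ⟶ X), Epi q)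
    (γ : F ⟶ G) (h : γ.app P = 0) : γ = 0 := by
  ext X
  obtain ⟨n, q, _⟩ := hP X
  exact γ.app_eq_zero_of_epi q (γ.app_biproduct_eq_zero _ fun _ => h)

theorem appLinearMap_injective_of_generator (R : Type*) [Semiring R] [Preadditive C]
    [Preadditive D] [Linear R D] [F.Additive] [HasFiniteBiproducts C] [HasFiniteBiproducts D]
    [F.PreservesEpimorphisms] (P : C)
    (hP : ∀ X : C, ∃ (n : ℕ) (q : (⨁ fun _ : Fin n => P) ⟶ X), Epi q) :
    Function.Injective (appLinearMap (R := R) (F := F) (G := G) P) :=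
  (injective_iff_map_eq_zero _).2 (eq_zero_of_app_generator_eq_zero P hP)

end CategoryTheory.NatTrans

/-- Let `A`, `B` be `k`-linear abelian categories with the hom spaces
of `B` finite-dimensional, and `F, G : A ⥤ B` right exact `k`-linear functors. If `A`
has a projective generator `P` and every object of `A` has finite length, then
`Nat(F, G)` is finite-dimensional of dimension at most `dim Hom(F(P), G(P))`. -/
theorem natTrans_finiteDimensional
    (k : Type*) [Field k]
    {A : Type*} [Category A] [Abelian A] [Linear k A]
    {B : Type*} [Category B] [Abelian B] [Linear k B]
    [∀ X Y : B, FiniteDimensional k (X ⟶ Y)]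
    (F G : A ⥤ B) [F.Additive] [F.Linear k] [PreservesFiniteColimits F]
    [G.Additive] [G.Linear k] [PreservesFiniteColimits G]
    (P : A) [Projective P]
    (hP : ∀ X : A, ∃ (n : ℕ) (q : (⨁ fun _ : Fin n => P) ⟶ X), Epi q)
    [∀ X : A, IsNoetherianObject X] [∀ X : A, IsArtinianObject X] :
    FiniteDimensional k (F ⟶ G) ∧
      Module.finrank k (F ⟶ G) ≤ Module.finrank k (F.obj P ⟶ G.obj P) := by
  have hinj := NatTrans.appLinearMap_injective_of_generator (F := F) (G := G) k P hP
  exact ⟨FiniteDimensional.of_injective _ hinj, LinearMap.finrank_le_finrank_of_injective hinj⟩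
end

section
/- Let C be a finite tensor category over an algebraically closed field k. Then the set Piv(C) of pivotal structures on C, i.e. monoidal natural isomorphisms id_C → (−)**, is finite. -/
open CategoryTheory CategoryTheory.MonoidalCategory CategoryTheory.Limits

attribute [local instance] CategoryTheory.Abelian.hasFiniteBiproducts

namespace PivotalStmt

variable {C : Type*} [Category C] [MonoidalCategory C] [RightRigidCategory C]

/-- The canonical pairing evaluation `(Yᘁ ⊗ Xᘁ) ⊗ (X ⊗ Y) ⟶ 𝟙`. -/
def pairEv (X Y : C) : ((Yᘁ : C) ⊗ (Xᘁ : C)) ⊗ (X ⊗ Y) ⟶ 𝟙_ C :=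
  (α_ (Yᘁ) (Xᘁ) (X ⊗ Y)).hom ≫
    ((Yᘁ : C) ◁ ((α_ (Xᘁ) X Y).inv ≫ (ε_ X (Xᘁ) ▷ Y) ≫ (λ_ Y).hom)) ≫ ε_ Y (Yᘁ)

/-- The canonical pairing coevaluation `𝟙 ⟶ (X ⊗ Y) ⊗ (Yᘁ ⊗ Xᘁ)`. -/
def pairCoev (X Y : C) : 𝟙_ C ⟶ (X ⊗ Y) ⊗ ((Yᘁ : C) ⊗ (Xᘁ : C)) :=
  η_ X (Xᘁ) ≫ (X ◁ (λ_ (Xᘁ : C)).inv) ≫ (X ◁ (η_ Y (Yᘁ) ▷ (Xᘁ : C))) ≫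
    (X ◁ (α_ Y (Yᘁ) (Xᘁ)).hom) ≫ (α_ X Y ((Yᘁ : C) ⊗ (Xᘁ : C))).inv

/-- The canonical morphism `(X ⊗ Y)ᘁ ⟶ Yᘁ ⊗ Xᘁ`. -/
def dualComp (X Y : C) : ((X ⊗ Y)ᘁ : C) ⟶ (Yᘁ : C) ⊗ (Xᘁ : C) :=
  (ρ_ _).inv ≫ (_ ◁ pairCoev X Y) ≫ (α_ _ _ _).inv ≫
    (ε_ (X ⊗ Y) ((X ⊗ Y)ᘁ) ▷ _) ≫ (λ_ _).hom

/-- The canonical morphism `Yᘁ ⊗ Xᘁ ⟶ (X ⊗ Y)ᘁ`. -/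
def dualCompInv (X Y : C) : (Yᘁ : C) ⊗ (Xᘁ : C) ⟶ ((X ⊗ Y)ᘁ : C) :=
  (ρ_ _).inv ≫ (_ ◁ η_ (X ⊗ Y) ((X ⊗ Y)ᘁ)) ≫ (α_ _ _ _).inv ≫
    (pairEv X Y ▷ _) ≫ (λ_ _).hom

/-- The canonical monoidal comparison `Xᘁᘁ ⊗ Yᘁᘁ ⟶ (X ⊗ Y)ᘁᘁ` for the double dual. -/
def ddComparison (X Y : C) : ((Xᘁ : C)ᘁ ⊗ ((Yᘁ : C)ᘁ) : C) ⟶ (((X ⊗ Y)ᘁ : C)ᘁ : C) :=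
  dualCompInv (Yᘁ) (Xᘁ) ≫ rightAdjointMate (dualComp X Y)

/-- The right dual, with the instance coming from rigidity. -/
abbrev D (X : C) : C := Xᘁ

/-- The canonical isomorphism `𝟙 ≅ 𝟙ᘁ`. -/
noncomputable def unitDualIso : (𝟙_ C) ≅ D (𝟙_ C) :=
  rightDualIso exactPairingUnit (RightRigidCategory.rightDual (𝟙_ C)).exact

/-- The canonical unit comparison `𝟙 ⟶ 𝟙ᘁᘁ`. -/
noncomputable def ddUnit : (𝟙_ C) ⟶ D (D (𝟙_ C)) :=
  unitDualIso.hom ≫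
    @rightAdjointMate C _ _ (D (𝟙_ C)) (𝟙_ C) (RightRigidCategory.rightDual _)
      (RightRigidCategory.rightDual _) unitDualIso.inv

/-- A pivotal structure on `C`: a monoidal natural isomorphism `id_C ≅ (−)ᘁᘁ`. -/
structure PivotalStructure (C : Type*) [Category C] [MonoidalCategory C]
    [RightRigidCategory C] where
  app : ∀ X : C, X ⟶ ((Xᘁ : C)ᘁ : C)
  isIso : ∀ X : C, IsIso (app X)
  naturality : ∀ {X Y : C} (f : X ⟶ Y),
    f ≫ app Y = app X ≫ rightAdjointMate (rightAdjointMate f)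
  tensor : ∀ X Y : C, app (X ⊗ Y) = (app X ⊗ₘ app Y) ≫ ddComparison X Y
  unit : app (𝟙_ C) = ddUnit

end PivotalStmt

open PivotalStmt

section PivotalAuxSection

set_option linter.unusedSectionVars false

namespace PivotalAux

variable {k : Type*} [Field k] [IsAlgClosed k]
variable {C : Type*} [Category C] [Abelian C] [Linear k C]
  [MonoidalCategory C] [MonoidalPreadditive C] [MonoidalLinear k C]
  [RigidCategory C] [Simple (𝟙_ C)]
  [∀ X : C, IsArtinianObject X]
  [∀ X Y : C, FiniteDimensional k (X ⟶ Y)]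

/-- Natural endotransformations agreeing on a projective generator agree everywhere. -/
theorem natural_ext (P : C)
    (hP : ∀ X : C, ∃ (n : ℕ) (q : (⨁ fun _ : Fin n => P) ⟶ X), Epi q)
    (θ θ' : ∀ X : C, X ⟶ X)
    (hθ : ∀ {A B : C} (f : A ⟶ B), f ≫ θ B = θ A ≫ f)
    (hθ' : ∀ {A B : C} (f : A ⟶ B), f ≫ θ' B = θ' A ≫ f)
    (h : θ P = θ' P) (X : C) : θ X = θ' X := by
  obtain ⟨n, q, hq⟩ := hP X
  have hb : θ (⨁ fun _ : Fin n => P) = θ' (⨁ fun _ : Fin n => P) := by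
    apply biproduct.hom_ext'
    intro j
    rw [hθ (biproduct.ι (fun _ : Fin n => P) j), hθ' (biproduct.ι (fun _ : Fin n => P) j), h]
  rw [← cancel_epi q, hθ q, hθ' q, hb]

theorem smul_tensor' {W X Y Z : C} (a : k) (f : W ⟶ X) (g : Y ⟶ Z) :
    (a • f) ⊗ₘ g = a • (f ⊗ₘ g) := by
  rw [MonoidalCategory.tensorHom_def, MonoidalCategory.tensorHom_def, MonoidalLinear.smul_whiskerRight, Linear.smul_comp]

theorem tensor_smul' {W X Y Z : C} (a : k) (f : W ⟶ X) (g : Y ⟶ Z) :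
    f ⊗ₘ (a • g) = a • (f ⊗ₘ g) := by
  rw [MonoidalCategory.tensorHom_def, MonoidalCategory.tensorHom_def, MonoidalLinear.whiskerLeft_smul, Linear.comp_smul]

theorem mono_whiskerLeft (X : C) {A B : C} (m : A ⟶ B) [Mono m] : Mono (X ◁ m) := by
  constructor
  intro Z h₁ h₂ heq
  have key : ∀ (h : Z ⟶ X ⊗ A),
      (tensorLeftHomEquiv Z X (Xᘁ) B).symm (h ≫ (X ◁ m)) =
        (tensorLeftHomEquiv Z X (Xᘁ) A).symm h ≫ m := by
    intro h
    apply (tensorLeftHomEquiv Z X (Xᘁ) B).injective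
    rw [Equiv.apply_symm_apply, tensorLeftHomEquiv_naturality, Equiv.apply_symm_apply]
  have h2 : (tensorLeftHomEquiv Z X (Xᘁ) A).symm h₁ ≫ m
      = (tensorLeftHomEquiv Z X (Xᘁ) A).symm h₂ ≫ m := by
    rw [← key, ← key, heq]
  rw [cancel_mono] at h2
  exact (tensorLeftHomEquiv Z X (Xᘁ) A).symm.injective h2

/-- A family of linearly independent "vectors" `𝟙 ⟶ B` assembles to a mono `⊕ 𝟙 ⟶ B`. -/
theorem mono_desc {n : ℕ} {B : C} (u : Fin n → ((𝟙_ C) ⟶ B))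
    (hu : ∀ d : Fin n → k, ∑ j, d j • u j = 0 → ∀ j, d j = 0) :
    Mono (biproduct.desc u) := by
  classical
  set U := biproduct.desc u with hU
  have hker : kernel.ι U = 0 := by
    by_contra hk
    have hKnz : ¬ IsZero (kernel U) := fun hz => hk (hz.eq_of_src _ _)
    obtain ⟨S, hS⟩ := exists_simple_subobject hKnz
    haveI := hS
    set m : (S : C) ⟶ ⨁ fun _ : Fin n => (𝟙_ C) := S.arrow ≫ kernel.ι U with hm
    haveI : Mono m := mono_comp _ _
    have hmU : m ≫ U = 0 := by rw [hm, Category.assoc, kernel.condition, comp_zero]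
    have hmne : m ≠ 0 := by
      intro h0
      have h1 : (𝟙 ((S : C))) ≫ m = 0 ≫ m := by rw [h0, comp_zero, zero_comp]
      rw [cancel_mono m] at h1
      exact id_nonzero _ h1
    have hex : ∃ j, m ≫ biproduct.π (fun _ : Fin n => (𝟙_ C)) j ≠ 0 := by
      by_contra hall
      push_neg at hall
      exact hmne (biproduct.hom_ext _ _ fun j => by simpa using hall j)
    obtain ⟨j₀, hj₀⟩ := hex
    haveI : IsIso (m ≫ biproduct.π (fun _ : Fin n => (𝟙_ C)) j₀) := isIso_of_hom_simple hj₀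
    set w : (𝟙_ C) ⟶ ⨁ fun _ : Fin n => (𝟙_ C) :=
      inv (m ≫ biproduct.π (fun _ : Fin n => (𝟙_ C)) j₀) ≫ m with hw
    have hwU : w ≫ U = 0 := by rw [hw, Category.assoc, hmU, comp_zero]
    have hwne : w ≠ 0 := by
      intro h0
      apply hmne
      have h1 : m = (m ≫ biproduct.π (fun _ : Fin n => (𝟙_ C)) j₀) ≫ w := by
        rw [hw, ← Category.assoc, IsIso.hom_inv_id, Category.id_comp]
      rw [h1, h0, comp_zero]
    choose d hd using fun j =>
      endomorphism_simple_eq_smul_id (𝕜 := k) (w ≫ biproduct.π (fun _ : Fin n => (𝟙_ C)) j)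
    have hsum0 : ∑ j, d j • u j = 0 := by
      have e1 : w ≫ U = ∑ j, (w ≫ biproduct.π (fun _ : Fin n => (𝟙_ C)) j) ≫ u j := by
        rw [hU, biproduct.desc_eq, Preadditive.comp_sum]
        simp [Category.assoc]
      calc ∑ j, d j • u j = ∑ j, (w ≫ biproduct.π (fun _ : Fin n => (𝟙_ C)) j) ≫ u j := by
            refine Finset.sum_congr rfl fun j _ => ?_
            rw [← hd j, Linear.smul_comp, Category.id_comp]
        _ = w ≫ U := e1.symm
        _ = 0 := hwU
    have hzero := hu d hsum0
    apply hwne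
    apply biproduct.hom_ext
    intro j
    rw [← hd j, hzero j, zero_smul, zero_comp]
  apply Preadditive.mono_of_cancel_zero
  intro Z g hg
  rw [← kernel.lift_ι U g hg, hker, comp_zero]


/-- the "vector" associated to an endomorphism of `Y` -/
noncomputable def vec {Y : C} (v : Y ⟶ Y) : (𝟙_ C) ⟶ Y ⊗ (Yᘁ : C) :=
  η_ Y (Yᘁ) ≫ (v ▷ (Yᘁ : C))

theorem vec_cancel {Y : C} (v : Y ⟶ Y) (h : vec v = 0) : v = 0 := by
  rw [vec] at h
  have h2 := congrArg (tensorRightHomEquiv (𝟙_ C) Y (Yᘁ) Y).symm h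
  rw [tensorRightHomEquiv_symm_coevaluation_comp_whiskerRight] at h2
  have h0 : (tensorRightHomEquiv (𝟙_ C) Y (Yᘁ) Y).symm 0 = 0 := by
    simp [tensorRightHomEquiv]
  rw [h0] at h2
  rw [← cancel_epi (λ_ Y).hom, h2, comp_zero]

/-- The key transform `T`. -/
noncomputable def trans {X Y : C} (h : X ⊗ Y ⟶ X ⊗ Y) : X ⟶ X ⊗ (Y ⊗ (Yᘁ : C)) :=
  (ρ_ X).inv ≫ (X ◁ η_ Y (Yᘁ)) ≫ (α_ X Y (Yᘁ : C)).inv ≫ (h ▷ (Yᘁ : C)) ≫ (α_ X Y (Yᘁ : C)).hom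

theorem trans_tensor {X Y : C} (f : X ⟶ X) (w : Y ⟶ Y) :
    trans (f ⊗ₘ w) = f ≫ (ρ_ X).inv ≫ (X ◁ vec w) := by
  rw [trans, vec, MonoidalCategory.tensorHom_def, comp_whiskerRight, Category.assoc,
    ← associator_inv_naturality_left_assoc, whisker_exchange_assoc,
    ← rightUnitor_inv_naturality_assoc, ← associator_inv_naturality_middle_assoc]
  simp [MonoidalCategory.whiskerLeft_comp]

/-- Cancellation: if `∑ f j ⊗ₘ v j = 0` with the `v j` linearly independent, then all `f j = 0`. -/
theorem tensor_right_cancel {X Y : C} {n : ℕ} (f : Fin n → (X ⟶ X)) (v : Fin n → (Y ⟶ Y))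
    (hv : ∀ d : Fin n → k, ∑ j, d j • v j = 0 → ∀ j, d j = 0)
    (hsum : ∑ j, (f j ⊗ₘ v j) = 0) : ∀ j, f j = 0 := by
  classical
  -- the vectors are linearly independent
  have hvec : ∀ d : Fin n → k, ∑ j, d j • vec (v j) = 0 → ∀ j, d j = 0 := by
    intro d hd
    apply hv d
    apply vec_cancel
    rw [vec]
    have : ((∑ j, d j • v j) ▷ (Yᘁ : C)) = ∑ j, d j • (v j ▷ (Yᘁ : C)) := by
      rw [sum_whiskerRight]
      exact Finset.sum_congr rfl fun j _ => by rw [MonoidalLinear.smul_whiskerRight]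
    rw [this, Preadditive.comp_sum]
    rw [← hd]
    exact Finset.sum_congr rfl fun j _ => by rw [Linear.comp_smul, vec]
  haveI hU : Mono (biproduct.desc (fun j => vec (v j))) := mono_desc _ hvec
  haveI hXU : Mono (X ◁ biproduct.desc (fun j => vec (v j))) := mono_whiskerLeft _ _
  set U := biproduct.desc (fun j => vec (v j)) with hUdef
  set W : X ⟶ X ⊗ (⨁ fun _ : Fin n => (𝟙_ C)) :=
    ∑ j, f j ≫ (ρ_ X).inv ≫ (X ◁ biproduct.ι (fun _ : Fin n => (𝟙_ C)) j) with hW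
  have hWU : W ≫ (X ◁ U) = 0 := by
    rw [hW, Preadditive.sum_comp]
    have e1 : ∀ j, (f j ≫ (ρ_ X).inv ≫ (X ◁ biproduct.ι (fun _ : Fin n => (𝟙_ C)) j)) ≫ (X ◁ U)
        = trans (f j ⊗ₘ v j) := by
      intro j
      rw [trans_tensor, Category.assoc, Category.assoc, ← MonoidalCategory.whiskerLeft_comp,
        hUdef, biproduct.ι_desc]
    rw [Finset.sum_congr rfl fun j _ => e1 j]
    have e2 : ∑ j, trans (f j ⊗ₘ v j) = trans (∑ j, (f j ⊗ₘ v j)) := by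
      simp only [trans]
      rw [sum_whiskerRight, Preadditive.sum_comp, Preadditive.comp_sum, Preadditive.comp_sum,
        Preadditive.comp_sum]
    rw [e2, hsum]
    rw [trans]
    simp
  have hW0 : W = 0 := by
    have := hWU
    rw [← zero_comp (f := (X ◁ U))] at this
    exact (cancel_mono (X ◁ U)).mp this
  intro j
  have hcomp : W ≫ (X ◁ biproduct.π (fun _ : Fin n => (𝟙_ C)) j) = f j ≫ (ρ_ X).inv := by
    rw [hW, Preadditive.sum_comp]
    rw [Finset.sum_eq_single_of_mem j (Finset.mem_univ j)]
    · rw [Category.assoc, Category.assoc, ← MonoidalCategory.whiskerLeft_comp,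
        biproduct.ι_π_self, MonoidalCategory.whiskerLeft_id, Category.comp_id]
    · intro i _ hne
      rw [Category.assoc, Category.assoc, ← MonoidalCategory.whiskerLeft_comp,
        biproduct.ι_π_ne _ hne]
      simp
  rw [hW0, zero_comp] at hcomp
  have := congrArg (fun t => t ≫ (ρ_ X).hom) hcomp.symm
  simpa using this


section Pivotal

open PivotalStmt

variable {C : Type*} [Category C] [MonoidalCategory C] [RightRigidCategory C]

noncomputable def phi (p₀ p : PivotalStructure C) (X : C) : X ⟶ X :=
  letI := p₀.isIso X
  p.app X ≫ inv (p₀.app X)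

theorem phi_comp_app (p₀ p : PivotalStructure C) (X : C) :
    phi p₀ p X ≫ p₀.app X = p.app X := by
  letI := p₀.isIso X
  rw [phi, Category.assoc, IsIso.inv_hom_id, Category.comp_id]

theorem phi_natural (p₀ p : PivotalStructure C) {A B : C} (f : A ⟶ B) :
    f ≫ phi p₀ p B = phi p₀ p A ≫ f := by
  letI := p₀.isIso A; letI := p₀.isIso B
  rw [phi, phi, ← Category.assoc, p.naturality f, Category.assoc, Category.assoc]
  congr 1
  rw [IsIso.comp_inv_eq, Category.assoc, IsIso.eq_inv_comp]
  exact (p₀.naturality f).symm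

theorem phi_unit (p₀ p : PivotalStructure C) : phi p₀ p (𝟙_ C) = 𝟙 (𝟙_ C) := by
  letI := p₀.isIso (𝟙_ C)
  rw [phi, p.unit, ← p₀.unit, IsIso.hom_inv_id]

theorem phi_tensor (p₀ p : PivotalStructure C) (X Y : C) :
    phi p₀ p (X ⊗ Y) = phi p₀ p X ⊗ₘ phi p₀ p Y := by
  letI := p₀.isIso X; letI := p₀.isIso Y; letI := p₀.isIso (X ⊗ Y)
  haveI hXY : IsIso (p₀.app X ⊗ₘ p₀.app Y) := inferInstance
  have hddc : ddComparison X Y = inv (p₀.app X ⊗ₘ p₀.app Y) ≫ p₀.app (X ⊗ Y) := by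
    rw [p₀.tensor X Y, ← Category.assoc, IsIso.inv_hom_id, Category.id_comp]
  haveI hdd : IsIso (ddComparison X Y) := by rw [hddc]; infer_instance
  have hinvtensor : inv (p₀.app X ⊗ₘ p₀.app Y) = inv (p₀.app X) ⊗ₘ inv (p₀.app Y) := by
    apply IsIso.inv_eq_of_hom_inv_id
    rw [tensorHom_comp_tensorHom, IsIso.hom_inv_id, IsIso.hom_inv_id, id_tensorHom_id]
  have hinv : inv (p₀.app (X ⊗ Y))
      = inv (ddComparison X Y) ≫ (inv (p₀.app X) ⊗ₘ inv (p₀.app Y)) := by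
    apply IsIso.inv_eq_of_hom_inv_id
    rw [p₀.tensor X Y, Category.assoc, IsIso.hom_inv_id_assoc, ← hinvtensor, IsIso.hom_inv_id]
  rw [phi, p.tensor X Y, hinv, Category.assoc, IsIso.hom_inv_id_assoc, tensorHom_comp_tensorHom]
  rfl

theorem pivotal_ext {p q : PivotalStructure C} (h : ∀ X : C, p.app X = q.app X) : p = q := by
  have h' : p.app = q.app := funext h
  cases p; cases q
  cases h'
  rfl

end Pivotal

end PivotalAux

end PivotalAuxSection

/-- The set of pivotal structures on a finite tensor category over an
algebraically closed field `k` is finite. -/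
theorem pivotalStructure_finite
    (k : Type*) [Field k] [IsAlgClosed k]
    {C : Type*} [Category C] [Abelian C] [Linear k C]
    [MonoidalCategory C] [MonoidalPreadditive C] [MonoidalLinear k C]
    [RigidCategory C] [Simple (𝟙_ C)]
    [∀ X : C, IsNoetherianObject X] [∀ X : C, IsArtinianObject X]
    [∀ X Y : C, FiniteDimensional k (X ⟶ Y)]
    (P : C) [Projective P]
    (hP : ∀ X : C, ∃ (n : ℕ) (q : (⨁ fun _ : Fin n => P) ⟶ X), Epi q) :
    Finite (PivotalStructure C) := by
  classical
  by_cases hne : Nonempty (PivotalStructure C)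
  · obtain ⟨p₀⟩ := hne
    -- lifting a linear relation between the `phi`'s from `P` to all objects
    have lift : ∀ (s : Finset (PivotalStructure C)) (g : PivotalStructure C → k),
        (∑ q ∈ s, g q • PivotalAux.phi p₀ q P = 0) →
        ∀ X : C, ∑ q ∈ s, g q • PivotalAux.phi p₀ q X = 0 := by
      intro s g h X
      have := PivotalAux.natural_ext P hP
        (fun X => ∑ q ∈ s, g q • PivotalAux.phi p₀ q X) (fun X => 0)
        (fun {A B} f => by
          rw [Preadditive.comp_sum, Preadditive.sum_comp]
          exact Finset.sum_congr rfl fun q _ => by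
            rw [Linear.comp_smul, Linear.smul_comp, PivotalAux.phi_natural])
        (fun {A B} f => by rw [comp_zero, zero_comp])
        (by simpa using h) X
      simpa using this
    have key : ∀ (N : ℕ) (s : Finset (PivotalStructure C)), s.card ≤ N →
        ∀ g : PivotalStructure C → k,
        (∀ X : C, ∑ q ∈ s, g q • PivotalAux.phi p₀ q X = 0) →
        ∀ q ∈ s, g q = 0 := by
      intro N
      induction N with
      | zero =>
        intro s hs g hg q hq
        rw [Nat.le_zero, Finset.card_eq_zero] at hs
        subst hs
        exact absurd hq (Finset.notMem_empty q)
      | succ N IH =>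
        intro s hs g hg p hp
        by_contra hgp
        set t := s.filter (fun q => g q ≠ 0) with ht
        have hpt : p ∈ t := by rw [ht, Finset.mem_filter]; exact ⟨hp, hgp⟩
        have htsub : t ⊆ s := Finset.filter_subset _ _
        have hne' : ∀ q ∈ t, g q ≠ 0 := fun q hq => (Finset.mem_filter.mp hq).2
        have hgt : ∀ X : C, ∑ q ∈ t, g q • PivotalAux.phi p₀ q X = 0 := by
          intro X
          rw [← hg X, ht]
          exact Finset.sum_filter_of_ne fun x _ hfx hgx => hfx (by rw [hgx, zero_smul])
        rcases Nat.lt_or_ge t.card 2 with hc | hc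
        · -- `t` is a singleton: evaluate at the unit object
          have hc1 : t.card = 1 :=
            le_antisymm (by omega) (Finset.card_pos.mpr ⟨p, hpt⟩)
          obtain ⟨q, hq⟩ := Finset.card_eq_one.mp hc1
          have h1 := hgt (𝟙_ C)
          rw [hq, Finset.sum_singleton, PivotalAux.phi_unit] at h1
          rcases smul_eq_zero.mp h1 with h | h
          · exact hne' q (by rw [hq]; exact Finset.mem_singleton_self q) h
          · exact id_nonzero _ h
        · -- at least two nonzero coefficients
          set t' := t.erase p with ht'
          have ht'card : t'.card = t.card - 1 := Finset.card_erase_of_mem hpt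
          have ht'le : t'.card ≤ N := by
            have h1 : t.card ≤ s.card := Finset.card_le_card htsub
            omega
          have ht'pos : 0 < t'.card := by omega
          set a : PivotalStructure C → k := fun i => -(g i / g p) with ha
          have hane : ∀ i ∈ t', a i ≠ 0 := by
            intro i hi h0
            have h1 := hne' i (Finset.mem_of_mem_erase hi)
            have h2 := hne' p hpt
            simp only [ha, neg_eq_zero, div_eq_zero_iff] at h0
            rcases h0 with h | h
            · exact h1 h
            · exact h2 h
          have hrep : ∀ X : C,
              PivotalAux.phi p₀ p X = ∑ i ∈ t', a i • PivotalAux.phi p₀ i X := by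
            intro X
            have h0 := hgt X
            rw [← Finset.add_sum_erase _ _ hpt, ← ht'] at h0
            have h1 : g p • PivotalAux.phi p₀ p X
                = -∑ i ∈ t', g i • PivotalAux.phi p₀ i X :=
              eq_neg_of_add_eq_zero_left h0
            calc PivotalAux.phi p₀ p X
                = (g p)⁻¹ • (g p • PivotalAux.phi p₀ p X) := by
                  rw [smul_smul, inv_mul_cancel₀ (hne' p hpt), one_smul]
              _ = (g p)⁻¹ • (-∑ i ∈ t', g i • PivotalAux.phi p₀ i X) := by rw [h1]
              _ = ∑ i ∈ t', a i • PivotalAux.phi p₀ i X := by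
                  rw [smul_neg, Finset.smul_sum, ← Finset.sum_neg_distrib]
                  refine Finset.sum_congr rfl fun i _ => ?_
                  rw [smul_smul, ← neg_smul]
                  congr 1
                  simp only [ha]
                  rw [div_eq_mul_inv]
                  ring
          set c : PivotalStructure C → PivotalStructure C → k :=
            fun i j => a i * a j - (if i = j then a i else 0) with hcdef
          have hkey : ∀ X Y : C,
              ∑ j ∈ t', (∑ i ∈ t', c i j • PivotalAux.phi p₀ i X) ⊗ₘ PivotalAux.phi p₀ j Y
                = 0 := by
            intro X Y
            have e1 : PivotalAux.phi p₀ p (X ⊗ Y)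
                = ∑ i ∈ t', a i • (PivotalAux.phi p₀ i X ⊗ₘ PivotalAux.phi p₀ i Y) := by
              rw [hrep (X ⊗ Y)]
              exact Finset.sum_congr rfl fun i _ => by rw [PivotalAux.phi_tensor]
            have e2 : PivotalAux.phi p₀ p (X ⊗ Y)
                = ∑ i ∈ t', ∑ j ∈ t',
                    (a i * a j) • (PivotalAux.phi p₀ i X ⊗ₘ PivotalAux.phi p₀ j Y) := by
              rw [PivotalAux.phi_tensor, hrep X, hrep Y, sum_tensor]
              refine Finset.sum_congr rfl fun i _ => ?_
              rw [tensor_sum]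
              refine Finset.sum_congr rfl fun j _ => ?_
              rw [PivotalAux.smul_tensor', PivotalAux.tensor_smul', smul_smul]
            have e3 : ∑ i ∈ t', ∑ j ∈ t',
                  ((if i = j then a i else 0)
                    • (PivotalAux.phi p₀ i X ⊗ₘ PivotalAux.phi p₀ j Y))
                = ∑ i ∈ t', a i • (PivotalAux.phi p₀ i X ⊗ₘ PivotalAux.phi p₀ i Y) := by
              refine Finset.sum_congr rfl fun i hi => ?_
              rw [Finset.sum_eq_single_of_mem i hi]
              · rw [if_pos rfl]
              · intro j _ hji
                rw [if_neg fun h => hji h.symm, zero_smul]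
            have e4 : ∑ j ∈ t',
                  (∑ i ∈ t', c i j • PivotalAux.phi p₀ i X) ⊗ₘ PivotalAux.phi p₀ j Y
                = ∑ j ∈ t', ∑ i ∈ t',
                    c i j • (PivotalAux.phi p₀ i X ⊗ₘ PivotalAux.phi p₀ j Y) := by
              refine Finset.sum_congr rfl fun j _ => ?_
              rw [sum_tensor]
              exact Finset.sum_congr rfl fun i _ => by rw [PivotalAux.smul_tensor']
            have e5 : ∑ i ∈ t', ∑ j ∈ t',
                  c i j • (PivotalAux.phi p₀ i X ⊗ₘ PivotalAux.phi p₀ j Y)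
                = (∑ i ∈ t', ∑ j ∈ t',
                    (a i * a j) • (PivotalAux.phi p₀ i X ⊗ₘ PivotalAux.phi p₀ j Y))
                  - ∑ i ∈ t', ∑ j ∈ t',
                    ((if i = j then a i else 0)
                      • (PivotalAux.phi p₀ i X ⊗ₘ PivotalAux.phi p₀ j Y)) := by
              rw [← Finset.sum_sub_distrib]
              refine Finset.sum_congr rfl fun i _ => ?_
              rw [← Finset.sum_sub_distrib]
              refine Finset.sum_congr rfl fun j _ => ?_
              simp only [hcdef]
              rw [sub_smul]
            rw [e4, Finset.sum_comm, e5, e3, ← e1, ← e2, sub_self]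
          -- reindex `t'` by `Fin`
          set n' := t'.card with hn'
          set e : ↥t' ≃ Fin n' := t'.equivFin with he
          set v : Fin n' → (P ⟶ P) :=
            fun j => PivotalAux.phi p₀ ((e.symm j : ↥t') : PivotalStructure C) P with hv
          have hvind : ∀ d : Fin n' → k, ∑ j, d j • v j = 0 → ∀ j, d j = 0 := by
            intro d hd j
            set g' : PivotalStructure C → k :=
              fun q => if hq : q ∈ t' then d (e ⟨q, hq⟩) else 0 with hg'
            have hsum' : ∑ q ∈ t', g' q • PivotalAux.phi p₀ q P = 0 := by
              rw [← Finset.sum_coe_sort t'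
                (fun q => g' q • PivotalAux.phi p₀ q P)]
              rw [← Equiv.sum_comp e.symm
                (fun q : ↥t' =>
                  g' (q : PivotalStructure C) • PivotalAux.phi p₀ (q : PivotalStructure C) P)]
              rw [← hd]
              refine Finset.sum_congr rfl fun jj _ => ?_
              simp only [hg', hv]
              rw [dif_pos (e.symm jj).2]
              congr 1
              · rw [Subtype.coe_eta, Equiv.apply_symm_apply]
            have hAll := IH t' ht'le g' (lift t' g' hsum')
            have hthis := hAll ((e.symm j : ↥t') : PivotalStructure C) (e.symm j).2
            simp only [hg'] at hthis
            rw [dif_pos (e.symm j).2, Subtype.coe_eta, Equiv.apply_symm_apply] at hthis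
            exact hthis
          have hcancel : ∀ j ∈ t', ∑ i ∈ t', c i j • PivotalAux.phi p₀ i P = 0 := by
            have h0 := hkey P P
            set F : Fin n' → (P ⟶ P) :=
              fun jj => ∑ i ∈ t',
                c i ((e.symm jj : ↥t') : PivotalStructure C) • PivotalAux.phi p₀ i P with hF
            have h1 : ∑ jj, (F jj ⊗ₘ v jj) = 0 := by
              rw [← h0]
              rw [← Finset.sum_coe_sort t'
                (fun q => (∑ i ∈ t', c i q • PivotalAux.phi p₀ i P) ⊗ₘ PivotalAux.phi p₀ q P)]
              rw [← Equiv.sum_comp e.symm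
                (fun q : ↥t' =>
                  (∑ i ∈ t', c i (q : PivotalStructure C) • PivotalAux.phi p₀ i P)
                    ⊗ₘ PivotalAux.phi p₀ (q : PivotalStructure C) P)]
            have h2 := PivotalAux.tensor_right_cancel F v hvind h1
            intro j hj
            have hthis := h2 (e ⟨j, hj⟩)
            simp only [hF, Equiv.symm_apply_apply] at hthis
            exact hthis
          have hc0 : ∀ i ∈ t', ∀ j ∈ t', c i j = 0 := by
            intro i hi j hj
            exact IH t' ht'le (fun i => c i j) (lift t' _ (hcancel j hj)) i hi
          rcases Nat.lt_or_ge t'.card 2 with hc2 | hc2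
          · -- `t'` is a singleton
            have hc1 : t'.card = 1 := by omega
            obtain ⟨j₁, hj₁⟩ := Finset.card_eq_one.mp hc1
            have hj₁m : j₁ ∈ t' := by rw [hj₁]; exact Finset.mem_singleton_self j₁
            have hcc : a j₁ * a j₁ - a j₁ = 0 := by
              simpa [hcdef] using hc0 j₁ hj₁m j₁ hj₁m
            have ha1 : a j₁ = 1 := by
              have hmul : a j₁ * (a j₁ - 1) = 0 := by linear_combination hcc
              rcases mul_eq_zero.mp hmul with h | h
              · exact absurd h (hane j₁ hj₁m)
              · exact sub_eq_zero.mp h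
            have heq : ∀ X : C, p.app X = (j₁ : PivotalStructure C).app X := by
              intro X
              rw [← PivotalAux.phi_comp_app p₀ p X, ← PivotalAux.phi_comp_app p₀ j₁ X]
              congr 1
              rw [hrep X, hj₁, Finset.sum_singleton, ha1, one_smul]
            have hpj : p = j₁ := PivotalAux.pivotal_ext heq
            have hj₁t : j₁ ∈ t.erase p := by rw [← ht']; exact hj₁m
            exact (Finset.mem_erase.mp hj₁t).1 hpj.symm
          · -- `t'` has two distinct elements
            obtain ⟨i, hi, j, hj, hij⟩ := Finset.one_lt_card.mp hc2
            have hcc : a i * a j = 0 := by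
              simpa [hcdef, hij] using hc0 i hi j hj
            rcases mul_eq_zero.mp hcc with h | h
            · exact hane i hi h
            · exact hane j hj h
    have hLI : LinearIndependent k
        (fun p : PivotalStructure C => PivotalAux.phi p₀ p P) := by
      rw [linearIndependent_iff']
      intro s g hg i hi
      exact key s.card s le_rfl g (lift s g (by simpa using hg)) i hi
    haveI : Module.Finite k (P ⟶ P) := by infer_instance
    exact hLI.finite
  · haveI : IsEmpty (PivotalStructure C) := not_nonempty_iff.mp hne
    infer_instance
end

section
/- Let C be a finite tensor category over an algebraically closed field k, X an indecomposable object of C, and g ∈ Aut_⊗(id_C). Then g_X = λ · id_X + r for a unique λ ∈ kˣ and r in the maximal ideal of the local algebra End_C(X). Moreover: (a) if the order of g is a power of p = char(k) > 0, then λ = 1 and g_X is unipotent; (b) if the order of g is prime to p (or char k = 0), then r = 0, i.e. g_X is a nonzero scalar multiple of the identity. -/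
open CategoryTheory CategoryTheory.MonoidalCategory CategoryTheory.Limits

attribute [local instance] CategoryTheory.Abelian.hasFiniteBiproducts

/-- In an abelian category, an idempotent endomorphism of an indecomposable object is `0` or `𝟙`. -/
theorem aux_idem_trivial {C : Type*} [Category C] [Abelian C]
    (X : C) (hX : Indecomposable X) (e : X ⟶ X) (he : e ≫ e = e) : e = 0 ∨ e = 𝟙 X := by
  obtain ⟨Y, i, p, hip, hpi⟩ := IsIdempotentComplete.idempotents_split X e he
  obtain ⟨Z, j, q, hjq, hqj⟩ := IsIdempotentComplete.idempotents_split X (𝟙 X - e)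
    (Idempotents.idem_of_id_sub_idem e he)
  haveI : Mono i := ⟨fun _ _ h => by
    replace h := congrArg (· ≫ p) h; simpa [hip] using h⟩
  haveI : Mono j := ⟨fun _ _ h => by
    replace h := congrArg (· ≫ q) h; simpa [hjq] using h⟩
  have hie : i ≫ e = i := by rw [← hpi, ← Category.assoc, hip, Category.id_comp]
  have hje : j ≫ e = 0 := by
    have h1 : j ≫ (𝟙 X - e) = j := by rw [← hqj, ← Category.assoc, hjq, Category.id_comp]
    have h2 := h1
    rw [Preadditive.comp_sub, Category.comp_id] at h2
    exact sub_eq_self.mp h2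
  have hiq : i ≫ q = 0 := by
    rw [← cancel_mono j, Category.assoc, hqj, Preadditive.comp_sub, hie, Category.comp_id,
      sub_self, Limits.zero_comp]
  have hjp : j ≫ p = 0 := by
    rw [← cancel_mono i, Category.assoc, hpi, hje, Limits.zero_comp]
  have φ : X ≅ Y ⊞ Z :=
    { hom := biprod.lift p q
      inv := biprod.desc i j
      hom_inv_id := by simp [hpi, hqj]
      inv_hom_id := by
        apply biprod.hom_ext' <;> apply biprod.hom_ext <;>
          simp [hip, hjq, hiq, hjp] }
  rcases hX.2 Y Z φ with h | h
  · left
    rw [← hpi, h.eq_of_tgt p 0, Limits.zero_comp]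
  · right
    have h0 : 𝟙 X - e = 0 := by rw [← hqj, h.eq_of_tgt q 0, Limits.zero_comp]
    rw [← sub_eq_zero, ← neg_sub]; simp [h0]

open Polynomial in
/-- In a finite-dimensional algebra over an algebraically closed field in which the only
idempotents are `0` and `1`, every element is a scalar plus a nilpotent. -/
theorem aux_exists_nilpotent_sub_scalar {k A : Type*} [Field k] [IsAlgClosed k] [Ring A]
    [Algebra k A] [Nontrivial A] [FiniteDimensional k A]
    (hidem : ∀ e : A, e * e = e → e = 0 ∨ e = 1) (f : A) :
    ∃ l : k, IsNilpotent (f - algebraMap k A l) := by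
  have hint : IsIntegral k f := IsIntegral.of_finite k f
  have hm0 : minpoly k f ≠ 0 := minpoly.ne_zero hint
  obtain ⟨l, hroot⟩ := IsAlgClosed.exists_root (minpoly k f) (minpoly.degree_pos hint).ne'
  obtain ⟨q, hq⟩ := Polynomial.pow_rootMultiplicity_dvd (minpoly k f) l
  set a := (minpoly k f).rootMultiplicity l with ha
  have ha' : 0 < a := (Polynomial.rootMultiplicity_pos hm0).2 hroot
  have hql : q.eval l ≠ 0 := by
    intro h
    have hdvd : (X - C l) ^ (a + 1) ∣ minpoly k f := by
      rw [hq, pow_succ]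
      exact mul_dvd_mul_left _ ((Polynomial.dvd_iff_isRoot).2 h)
    exact Polynomial.pow_rootMultiplicity_not_dvd hm0 l hdvd
  have hqconst : q.natDegree = 0 := by
    by_contra hqd
    obtain ⟨mu, hmu⟩ := IsAlgClosed.exists_root q (by
      intro h
      exact hqd (by rw [Polynomial.natDegree_eq_zero_iff_degree_le_zero]; exact le_of_eq h))
    have hcop : IsCoprime ((X - C l) ^ a) q :=
      (((Polynomial.irreducible_X_sub_C l).coprime_iff_not_dvd).2
        (fun h => hql ((Polynomial.dvd_iff_isRoot).1 h))).pow_left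
    obtain ⟨u, v, huv⟩ := hcop
    set e := Polynomial.aeval f (v * q) with he'
    have hrw : u * (X - C l) ^ a = 1 - v * q := by linear_combination huv
    have he : e * e = e := by
      have hpoly : v * q - (v * q) * (v * q) = (v * u) * ((X - C l) ^ a * q) := by
        linear_combination (-(v * q)) * huv
      have h2 : e - e * e = 0 := by
        rw [he', ← map_mul, ← map_sub, hpoly, ← hq, map_mul, minpoly.aeval, mul_zero]
      rw [sub_eq_zero] at h2
      exact h2.symm
    rcases hidem e he with h0 | h1
    · have hz : Polynomial.aeval f (u * (X - C l) ^ a - 1) = 0 := by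
        rw [hrw, sub_sub_cancel_left, map_neg, ← he', h0, neg_zero]
      obtain ⟨w, hw⟩ := minpoly.dvd k f hz
      have hl := congrArg (Polynomial.eval l) hw
      simp [hroot.eq_zero, zero_pow ha'.ne'] at hl
    · have hz : Polynomial.aeval f (v * q - 1) = 0 := by
        rw [map_sub, map_one, ← he', h1, sub_self]
      obtain ⟨w, hw⟩ := minpoly.dvd k f hz
      have hmmu : (minpoly k f).eval mu = 0 := by
        rw [hq]; simp [hmu.eq_zero]
      have hl := congrArg (Polynomial.eval mu) hw
      simp [hmmu, hmu.eq_zero] at hl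
  refine ⟨l, a, ?_⟩
  have hc : q.coeff 0 ≠ 0 := by
    intro h
    apply hm0
    rw [hq, Polynomial.eq_C_of_natDegree_eq_zero hqconst, h, map_zero, mul_zero]
  have h0 : Polynomial.aeval f (minpoly k f) = 0 := minpoly.aeval k f
  rw [hq, Polynomial.eq_C_of_natDegree_eq_zero hqconst, map_mul, map_pow, aeval_C,
    map_sub, aeval_X, aeval_C] at h0
  exact ((IsUnit.map (algebraMap k A) (isUnit_iff_ne_zero.2 hc)).mul_left_eq_zero).1 h0

/-- Let `C` be a finite tensor category over an algebraically closed
field `k`, `X` an indecomposable object, and `g ∈ Aut_⊗(id_C)`. Then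
`g_X = λ • id_X + r` for a unique `λ ∈ kˣ` and `r` in the maximal ideal (the nonunits)
of the local algebra `End(X)`. Moreover (a) if the order of `g` is a power of
`p = char k > 0` then `g_X` is unipotent, and (b) if the order of `g` is finite and
prime to `p` (automatic when `char k = 0`) then `g_X` is a nonzero scalar multiple of
the identity. -/
theorem monoidalNatAut_app_indecomposable
    (k : Type*) [Field k] [IsAlgClosed k]
    {C : Type*} [Category C] [Abelian C] [Linear k C]
    [MonoidalCategory C] [MonoidalPreadditive C] [MonoidalLinear k C]
    [RigidCategory C] [Simple (𝟙_ C)]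
    [∀ X : C, IsNoetherianObject X] [∀ X : C, IsArtinianObject X]
    [∀ X Y : C, FiniteDimensional k (X ⟶ Y)]
    (P : C) [Projective P]
    (hP : ∀ X : C, ∃ (n : ℕ) (q : (⨁ fun _ : Fin n => P) ⟶ X), Epi q)
    (X : C) (hX : Indecomposable X)
    (g : 𝟭 C ⟶ 𝟭 C) (hg : NatTrans.IsMonoidal g) (hg' : IsIso g)
    -- `g` viewed as an element of the endomorphism monoid of `𝟭 C`,
    -- and its component at `X` viewed as an element of the algebra `End X`:
    (gE : End (𝟭 C)) (hgE : gE = g) (gX : End X) (hgX : gX = g.app X) :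
    (∃! lr : k × End X, lr.1 ≠ 0 ∧ ¬ IsUnit lr.2 ∧ gX = lr.1 • (1 : End X) + lr.2) ∧
    (0 < ringChar k → (∃ m : ℕ, gE ^ (ringChar k ^ m) = 1) →
        IsNilpotent (gX - 1)) ∧
    ((∃ n : ℕ, 0 < n ∧ ¬ (ringChar k ∣ n) ∧ gE ^ n = 1) →
        ∃ a : k, a ≠ 0 ∧ gX = a • (1 : End X)) := by
  haveI : Nontrivial (End X) := by
    refine ⟨1, 0, fun h => hX.1 ?_⟩
    rw [IsZero.iff_id_eq_zero]
    exact h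
  haveI : FiniteDimensional k (End X) := inferInstanceAs (FiniteDimensional k (X ⟶ X))
  -- the only idempotents of `End X` are `0` and `1`
  have hidem : ∀ e : End X, e * e = e → e = 0 ∨ e = 1 := by
    intro e he
    exact aux_idem_trivial X hX e he
  obtain ⟨l, N, hN⟩ := aux_exists_nilpotent_sub_scalar (k := k) hidem gX
  set r : End X := gX - algebraMap k (End X) l with hr
  have hrnil : IsNilpotent r := ⟨N, hN⟩
  -- `gX` is a unit
  have hunit : IsUnit gX := by
    rw [hgX]
    haveI : IsIso (g.app X) := inferInstance
    exact ⟨⟨g.app X, CategoryTheory.inv (g.app X), by simp [End.mul_def],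
      by simp [End.mul_def]⟩, rfl⟩
  have hl : l ≠ 0 := by
    intro h
    subst h
    rw [map_zero, sub_zero] at hr
    exact hunit.not_isNilpotent (hr ▸ hrnil)
  have hrnonunit : ¬ IsUnit r := fun h => h.not_isNilpotent hrnil
  have hsum : gX = l • (1 : End X) + r := by
    rw [hr, Algebra.algebraMap_eq_smul_one]; abel
  -- components of powers
  have happ : ∀ n : ℕ, (gE ^ n).app X = gX ^ n := by
    intro n
    induction n with
    | zero => rfl
    | succ m ih =>
      rw [pow_succ, pow_succ, End.mul_def, End.mul_def, NatTrans.comp_app, ih, hgE, hgX]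
  refine ⟨⟨(l, r), ⟨hl, hrnonunit, hsum⟩, ?_⟩, ?_, ?_⟩
  · -- uniqueness
    rintro ⟨mu, r₂⟩ ⟨hmu, hr₂, heq⟩
    have hcomm : ∀ c : k, Commute r (algebraMap k (End X) c) :=
      fun c => (Algebra.commutes c r).symm
    have hmul : mu = l := by
      by_contra hne
      apply hr₂
      have : r₂ = algebraMap k (End X) (l - mu) + r := by
        have h1 : r₂ = gX - mu • (1 : End X) := by rw [heq]; abel
        rw [h1, hsum, map_sub, Algebra.algebraMap_eq_smul_one, Algebra.algebraMap_eq_smul_one]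
        abel
      rw [this]
      exact IsNilpotent.isUnit_add_left_of_commute hrnil
        (IsUnit.map (algebraMap k (End X)) (isUnit_iff_ne_zero.2 (sub_ne_zero.2
          (fun h => hne h.symm)))) (hcomm _)
    subst hmul
    have : r₂ = r := by
      have h1 : r₂ = gX - mu • (1 : End X) := by rw [heq]; abel
      rw [h1, hr, Algebra.algebraMap_eq_smul_one]
    rw [this]
  · -- (a) char-power order implies unipotent
    rintro hp ⟨m, hm⟩
    have hpow : gX ^ (ringChar k ^ m) = 1 := by
      rw [← happ, hm]; rfl
    haveI : CharP k (ringChar k) := ringChar.charP k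
    haveI : NeZero (ringChar k) := ⟨hp.ne'⟩
    haveI hfact : Fact (ringChar k).Prime := CharP.char_is_prime_of_pos k (ringChar k)
    haveI : CharP (End X) (ringChar k) :=
      charP_of_injective_algebraMap (algebraMap k (End X)).injective (ringChar k)
    refine ⟨ringChar k ^ m, ?_⟩
    rw [sub_pow_char_pow_of_commute _ _ (Commute.one_right gX), hpow, one_pow, sub_self]
  · -- (b) order prime to the characteristic implies scalar
    rintro ⟨n, hn0, hnd, h1⟩
    have hpow : gX ^ n = 1 := by rw [← happ, h1]; rfl
    have hnk : (n : k) ≠ 0 := fun h => hnd (ringChar.dvd h)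
    refine ⟨l, hl, ?_⟩
    -- set `s := l⁻¹ • r`, so `gX = l • (1 + s)` with `s` nilpotent
    set s : End X := l⁻¹ • r with hs
    have hsnil : IsNilpotent s := hrnil.smul _
    have hgXs : gX = l • ((1 : End X) + s) := by
      rw [smul_add, hs, smul_inv_smul₀ hl, hsum]
    have hcommP : ∀ p : Polynomial k, Commute s (Polynomial.aeval s p) := by
      intro p
      induction p using Polynomial.induction_on' with
      | add f g hf hg => rw [map_add]; exact hf.add_right hg
      | monomial m a =>
        rw [Polynomial.aeval_monomial]
        exact Commute.mul_right ((Algebra.commutes a s).symm) ((Commute.refl s).pow_right m)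
    -- the binomial polynomial
    set T : Polynomial k := (1 + Polynomial.X) ^ n with hT
    have hTs : Polynomial.aeval s T = (1 + s) ^ n := by
      rw [hT, map_pow, map_add, map_one, Polynomial.aeval_X]
    have hT0 : T.coeff 0 = 1 := by
      rw [Polynomial.coeff_zero_eq_eval_zero, hT]
      simp
    have hT1 : T.coeff 1 = n := by
      have hder : Polynomial.derivative T = Polynomial.C (n : k) * (1 + Polynomial.X) ^ (n - 1) := by
        rw [hT, Polynomial.derivative_pow]
        simp
      have h2 := Polynomial.coeff_derivative T 0
      rw [Polynomial.coeff_zero_eq_eval_zero, hder] at h2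
      simp at h2
      simpa using h2.symm
    set d : Polynomial k := T.divX with hd
    have hdT : s * Polynomial.aeval s d + 1 = (1 + s) ^ n := by
      have := congrArg (Polynomial.aeval s) (Polynomial.X_mul_divX_add T)
      rw [map_add, map_mul, Polynomial.aeval_X, hT0, Polynomial.aeval_C, map_one, hTs] at this
      exact this
    have hd0 : d.coeff 0 = (n : k) := by rw [hd, Polynomial.coeff_divX, hT1]
    have hdval : Polynomial.aeval s d = algebraMap k (End X) (n : k) + s * Polynomial.aeval s d.divX := by
      have := congrArg (Polynomial.aeval s) (Polynomial.X_mul_divX_add d)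
      rw [map_add, map_mul, Polynomial.aeval_X, hd0, Polynomial.aeval_C] at this
      rw [← this, add_comm]
    -- from `gX ^ n = 1` deduce `l ^ n = 1` and then `s * aeval s d = 0`
    have hkey : (l ^ n) • (s * Polynomial.aeval s d + 1) = 1 := by
      rw [hdT, ← smul_pow, ← hgXs, hpow]
    have hsd_nil : IsNilpotent (s * Polynomial.aeval s d) :=
      (hcommP d).isNilpotent_mul_right hsnil
    have hln : l ^ n = 1 := by
      have hsc : algebraMap k (End X) (1 - l ^ n) = (l ^ n) • (s * Polynomial.aeval s d) := by
        have h := hkey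
        rw [smul_add] at h
        have h2 : (l ^ n) • (s * Polynomial.aeval s d) = 1 - (l ^ n) • (1 : End X) :=
          eq_sub_of_add_eq h
        rw [h2, Algebra.algebraMap_eq_smul_one, sub_smul, one_smul]
      have hnil2 : IsNilpotent (algebraMap k (End X) (1 - l ^ n)) := by
        rw [hsc, Algebra.smul_def]
        exact Commute.isNilpotent_mul_left (Algebra.commutes (l ^ n)
          (s * Polynomial.aeval s d)) hsd_nil
      obtain ⟨M, hM⟩ := hnil2
      rw [← map_pow, ← map_zero (algebraMap k (End X))] at hM
      have := (algebraMap k (End X)).injective hM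
      have h3 : (1 - l ^ n) = 0 := (pow_eq_zero_iff'.mp this).1
      exact (sub_eq_zero.mp h3).symm
    have hsd : s * Polynomial.aeval s d = 0 := by
      have := hkey
      rw [hln, one_smul, add_eq_right] at this
      exact this
    -- `aeval s d` is a unit, hence `s = 0`
    have hdunit : IsUnit (Polynomial.aeval s d) := by
      rw [hdval]
      refine IsNilpotent.isUnit_add_left_of_commute ?_ ?_ ?_
      · exact (hcommP d.divX).isNilpotent_mul_right hsnil
      · exact IsUnit.map _ (isUnit_iff_ne_zero.2 hnk)
      · exact (Algebra.commutes (n : k) (s * Polynomial.aeval s d.divX)).symm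
    have hs0 : s = 0 := by
      obtain ⟨u, hu⟩ := hdunit
      calc s = s * ((Polynomial.aeval s d) * ↑u⁻¹) := by
              rw [← hu, Units.mul_inv, mul_one]
        _ = (s * Polynomial.aeval s d) * ↑u⁻¹ := by rw [mul_assoc]
        _ = 0 := by rw [hsd, zero_mul]
    have hr0 : r = 0 := by
      have := congrArg (fun x => l • x) hs0
      simpa [hs, smul_inv_smul₀ hl] using this
    rw [hsum, hr0, add_zero]
end

section
/- Let C be a finite tensor category over an algebraically closed field k of characteristic p > 0. Then the kernel of the group homomorphism φ : Aut_⊗(id_C) → Map(I, kˣ), g ↦ (i ↦ scalar of g on S_i), is exactly the p-primary part of the finite abelian group Aut_⊗(id_C), i.e. the subgroup of elements whose order is a power of p. -/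
/-!
If `g` acts trivially on every simple object, then `g - 1` vanishes on simples and is therefore
nilpotent on every object of finite length: once the kernels of the powers `(g - 1) ^ n`
stabilise, `g - 1` is injective on the image of `(g - 1) ^ n`, and that image, if it were nonzero,
would contain a simple subobject killed by `g - 1`. Since every object is a quotient of a finite
direct sum of copies of `P`, the exponent found for `P` works everywhere, so `(g - 1) ^ n = 0`,
and in characteristic `p` this gives `g ^ p ^ n - 1 = (g - 1) ^ p ^ n = 0`. Conversely, on a
simple object `S`, `g ^ p ^ m = 1` gives `(g - 1) ^ p ^ m = 0` in the division ring `End S`,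
so `g = 1` on `S`.
-/

open CategoryTheory CategoryTheory.MonoidalCategory CategoryTheory.Limits

attribute [local instance] CategoryTheory.Abelian.hasFiniteBiproducts

section CharP

variable {k : Type*} [Field k] (p : ℕ) [Fact p.Prime] [CharP k p]

theorem pow_char_pow_eq_one_iff_sub_one_pow_eq_zero {R : Type*} [Ring R] [Algebra k R]
    (b : R) (n : ℕ) : b ^ p ^ n = 1 ↔ (b - 1) ^ p ^ n = 0 := by
  nontriviality R
  have := charP_of_injective_algebraMap (algebraMap k R).injective p
  rw [sub_pow_char_pow_of_commute p n (Commute.one_right b), one_pow, sub_eq_zero]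

theorem eq_one_of_pow_char_pow_eq_one {R : Type*} [DivisionRing R] [Algebra k R] {b : R}
    {n : ℕ} (h : b ^ p ^ n = 1) : b = 1 :=
  sub_eq_zero.mp <| eq_zero_of_pow_eq_zero <|
    (pow_char_pow_eq_one_iff_sub_one_pow_eq_zero (k := k) p b n).mp h

end CharP

namespace CategoryTheory

variable {C : Type*} [Category C]

lemma NatTrans.app_eq_id_of_iso (α : 𝟭 C ⟶ 𝟭 C) {X Y : C} (e : X ≅ Y)
    (h : α.app Y = 𝟙 Y) : α.app X = 𝟙 X := by
  rw [← cancel_mono e.hom]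
  simpa [h] using (α.naturality e.hom).symm

section Preadditive

variable [Preadditive C] [HasFiniteBiproducts C]

lemma NatTrans.eq_zero_of_app_eq_zero_of_epi_biproduct {P : C}
    (hP : ∀ X : C, ∃ (n : ℕ) (q : (⨁ fun _ : Fin n => P) ⟶ X), Epi q)
    {α : End (𝟭 C)} (hα : α.app P = 0) : α = 0 := by
  have hsum : ∀ n, α.app (⨁ fun _ : Fin n => P) = 0 := fun n =>
    biproduct.hom_ext' _ _ fun j => by
      simpa [hα] using α.naturality (biproduct.ι (fun _ : Fin n => P) j)
  ext X
  obtain ⟨n, q, hq⟩ := hP X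
  rw [← cancel_epi q]
  simpa [hsum] using α.naturality q

end Preadditive

section Abelian

variable [Abelian C]

lemma mono_image_ι_comp_of_kernelSubobject_comp_le {X Y Z : C} {f : X ⟶ Y} {g : Y ⟶ Z}
    (h : kernelSubobject (f ≫ g) ≤ kernelSubobject f) : Mono (image.ι f ≫ g) := by
  refine Preadditive.mono_of_cancel_zero _ fun {W} z hz => ?_
  -- after pulling back along the epimorphism `factorThruImage f`, `z` lifts to `X`
  have hsq := pullback.condition (f := factorThruImage f) (g := z)
  have hfg : pullback.fst (factorThruImage f) z ≫ f ≫ g = 0 := by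
    rw [← image.fac_assoc f g, reassoc_of% hsq, hz, comp_zero]
  have hf : pullback.fst (factorThruImage f) z ≫ f = 0 :=
    (kernelSubobject_factors_iff f _).mp <|
      Subobject.factors_of_le _ h <| (kernelSubobject_factors_iff _ _).mpr hfg
  rw [← cancel_epi (pullback.snd (factorThruImage f) z), ← cancel_mono (image.ι f)]
  simp only [comp_zero, zero_comp, Category.assoc]
  rw [← reassoc_of% hsq, image.fac, hf]

theorem NatTrans.exists_pow_app_eq_zero {α : End (𝟭 C)}
    (hα : ∀ (T : C) [Simple T], α.app T = 0) (X : C) [IsNoetherianObject X]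
    [IsArtinianObject X] : ∃ n, (α ^ n).app X = 0 := by
  have hsucc : ∀ n, (α ^ (n + 1)).app X = (α ^ n).app X ≫ α.app X := fun n => by
    rw [pow_succ', End.mul_def, NatTrans.comp_app]
  let K : ℕ →o Subobject X := ⟨fun n => kernelSubobject ((α ^ n).app X),
    monotone_nat_of_le_succ fun n => by simpa only [hsucc] using kernelSubobject_comp_le _ _⟩
  obtain ⟨N, hN⟩ := monotone_chain_condition_of_isNoetherianObject K
  refine ⟨N, by_contra fun hne => ?_⟩
  set f : X ⟶ X := (α ^ N).app X
  have hI : ¬IsZero (image f) := fun hI => hne <| by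
    rw [← image.fac f, hI.eq_of_tgt (factorThruImage f) 0, zero_comp]
  have := isArtinianObject_of_mono (image.ι f)
  obtain ⟨T, _⟩ := exists_simple_subobject hI
  have : Mono (image.ι f ≫ α.app X) :=
    mono_image_ι_comp_of_kernelSubobject_comp_le (by rw [← hsucc]; exact (hN _ N.le_succ).ge)
  have hT0 : T.arrow ≫ image.ι f ≫ α.app X = 0 := by
    simpa [hα] using α.naturality (T.arrow ≫ image.ι f)
  exact Simple.not_isZero (T : C) <| IsZero.of_mono_eq_zero T.arrow <|
    (cancel_mono (image.ι f ≫ α.app X)).mp (hT0.trans zero_comp.symm)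

end Abelian

end CategoryTheory

/-- Let `C` be a finite tensor category over an algebraically closed
field `k` of characteristic `p > 0`, with a complete family `S : ι → C` of simple
objects. An element `g ∈ Aut_⊗(id_C)` lies in the kernel of
`φ : Aut_⊗(id_C) → Map(ι, kˣ)` (i.e. acts as the identity on every simple object) if
and only if it lies in the `p`-primary part of the finite abelian group `Aut_⊗(id_C)`
(i.e. its order is a power of `p`). -/
theorem monoidalNatAut_ker_eq_primaryPart
    (k : Type*) [Field k] [IsAlgClosed k]
    (p : ℕ) [CharP k p] (hp : 0 < p)
    {C : Type*} [Category C] [Abelian C] [Linear k C]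
    [MonoidalCategory C] [MonoidalPreadditive C] [MonoidalLinear k C]
    [RigidCategory C] [Simple (𝟙_ C)]
    [∀ X : C, IsNoetherianObject X] [∀ X : C, IsArtinianObject X]
    [∀ X Y : C, FiniteDimensional k (X ⟶ Y)]
    (P : C) [Projective P]
    (hP : ∀ X : C, ∃ (n : ℕ) (q : (⨁ fun _ : Fin n => P) ⟶ X), Epi q)
    {ι : Type} [Fintype ι] (S : ι → C) [∀ i, Simple (S i)]
    (hcomplete : ∀ T : C, Simple T → ∃ i, Nonempty (T ≅ S i))
    (g : 𝟭 C ⟶ 𝟭 C) (hg : NatTrans.IsMonoidal g) (hg' : IsIso g)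
    (gE : End (𝟭 C)) (hgE : gE = g) :
    (∀ i, g.app (S i) = 𝟙 (S i)) ↔ (∃ m : ℕ, gE ^ (p ^ m) = 1) := by
  subst hgE
  have : Fact p.Prime := ⟨(CharP.char_is_prime_or_zero k p).resolve_right hp.ne'⟩
  constructor
  · intro hS
    have hsimple : ∀ (T : C) [Simple T], (gE - 1).app T = 0 := fun T hT => by
      obtain ⟨i, ⟨e⟩⟩ := hcomplete T hT
      rw [NatTrans.app_sub, NatTrans.app_eq_id_of_iso gE e (hS i), End.one_def]
      exact sub_self _
    obtain ⟨n, hn⟩ := NatTrans.exists_pow_app_eq_zero hsimple P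
    refine ⟨n, (pow_char_pow_eq_one_iff_sub_one_pow_eq_zero (k := k) p gE n).mpr ?_⟩
    exact pow_eq_zero_of_le (Nat.lt_pow_self (Fact.out : p.Prime).one_lt).le
      (NatTrans.eq_zero_of_app_eq_zero_of_epi_biproduct hP hn)
  · rintro ⟨m, hm⟩ i
    have hpow : ((evaluation C C).obj (S i)).mapEnd (𝟭 C) gE ^ p ^ m = 1 := by
      rw [← map_pow, hm, map_one]
    exact eq_one_of_pow_char_pow_eq_one (k := k) (R := End (S i)) p hpow
end
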